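/- arXiv:2112.03182 — 3 statements merged into one kernel-verified Lean document; each statement's English description precedes it below -/
import Mathlib

section
/- Let μ and ν be faithful, diffuse Borel probability measures on [0,1] with cumulative distribution functions F and G, and let h = F⁻¹ ∘ G be the increasing rearrangement homeomorphism. Then for every p ∈ [1, ∞), the L^p(ν)-norm of h − id satisfies ‖h − id‖_{L^p(ν)} ≤ W_p(μ, ν). -/
open MeasureTheory

/-- The unit interval `[0,1]` as a subtype of `ℝ`. -/
abbrev UnitInt : Type := Set.Icc (0 : ℝ) 1

/-- The cumulative distribution function of a measure on `[0,1]`: `F(x) = μ([0,x])`. -/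
noncomputable def cdf01 (μ : Measure UnitInt) (x : UnitInt) : ℝ :=
  (μ (Set.Iic x)).toReal

/-- The `p`-Wasserstein distance between two Borel measures, defined as the infimum
over couplings `π` of `μ` and `ν` of `(∫ d(x,y)^p dπ)^(1/p)`. -/
noncomputable def Wp {E : Type*} [MeasurableSpace E] [PseudoMetricSpace E] (p : ℝ)
    (μ ν : Measure E) : ℝ :=
  sInf ((fun π : Measure (E × E) => (∫ z, dist z.1 z.2 ^ p ∂π) ^ (1 / p)) ''
    {π | π.map Prod.fst = μ ∧ π.map Prod.snd = ν})

/-!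
Since `F` is strictly increasing and `G` is a continuous increasing bijection of `[0,1]`, the map
`h = F⁻¹ ∘ G` is an increasing bijection pushing `ν` forward to `μ`; so it suffices to bound
`∫ |h t - t|^p dν` by the cost of an arbitrary coupling `π` of `μ` and `ν`. This is weak Kantorovich
duality with an explicit potential: for `c(u) = |u|^p` put `φ(x) = ∫₀ˣ c'(s - h⁻¹ s) ds` and
`ψ(y) = c(h y - y) - φ(h y)`. As `h⁻¹` is increasing and `c'` is monotone, comparing
`φ(x) - φ(h y)` with `c(x - y) - c(h y - y) = ∫_{h y}^x c'(s - y) ds` gives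
`φ(x) + ψ(y) ≤ c(x - y)`, with equality for `x = h y`. Integrating the inequality against `π`
and the equality against `ν` gives the claim.
-/

open Set ProbabilityTheory

theorem strictMono_measure_Iic {α : Type*} [LinearOrder α] [TopologicalSpace α]
    [OrderTopology α] [DenselyOrdered α] [MeasurableSpace α] [OpensMeasurableSpace α]
    (μ : Measure α) [IsFiniteMeasure μ] [μ.IsOpenPosMeasure] :
    StrictMono fun x => μ (Iic x) := by
  intro x y hxy
  calc μ (Iic x) < μ (Iic x) + μ (Ioo x y) :=
        ENNReal.lt_add_right (measure_ne_top _ _)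
          (isOpen_Ioo.measure_ne_zero μ (nonempty_Ioo.2 hxy))
    _ = μ (Iic x ∪ Ioo x y) :=
        (measure_union (Iic_disjoint_Ioi le_rfl |>.mono_right Ioo_subset_Ioi_self)
          measurableSet_Ioo).symm
    _ ≤ μ (Iic y) := measure_mono (union_subset (Iic_subset_Iic.2 hxy.le) fun _ ht => ht.2.le)

theorem strictMono_cdf01 (μ : Measure UnitInt) [IsFiniteMeasure μ] [μ.IsOpenPosMeasure] :
    StrictMono (cdf01 μ) := fun _ _ hxy =>
  ENNReal.toReal_strict_mono (measure_ne_top _ _) (strictMono_measure_Iic μ hxy)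

theorem ProbabilityTheory.continuous_cdf (μ : Measure ℝ) [IsProbabilityMeasure μ]
    [NullSingletonClass μ] : Continuous (cdf μ) := by
  refine continuous_iff_continuousAt.2 fun x => continuousAt_iff_continuous_left_right.2
    ⟨?_, (cdf μ).right_continuous x⟩
  have hjump : ENNReal.ofReal (cdf μ x - Function.leftLim (cdf μ) x) = 0 := by
    rw [← StieltjesFunction.measure_singleton, measure_cdf, measure_singleton]
  have hleft : Function.leftLim (cdf μ) x = cdf μ x :=
    le_antisymm ((monotone_cdf μ).leftLim_le le_rfl)
      (by linarith [ENNReal.ofReal_eq_zero.1 hjump])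
  exact continuousWithinAt_Iio_iff_Iic.1
    ((monotone_cdf μ).continuousWithinAt_Iio_iff_leftLim_eq.2 hleft)

theorem cdf01_eq_cdf_map (μ : Measure UnitInt) [IsProbabilityMeasure μ] (x : UnitInt) :
    cdf01 μ x = cdf (μ.map Subtype.val) x := by
  have : IsProbabilityMeasure (μ.map Subtype.val) := Measure.isProbabilityMeasure_map (by fun_prop)
  rw [cdf_eq_real, map_measureReal_apply measurable_subtype_coe measurableSet_Iic]
  rfl

theorem continuous_cdf01 (μ : Measure UnitInt) [IsProbabilityMeasure μ] [NullSingletonClass μ] :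
    Continuous (cdf01 μ) := by
  have : IsProbabilityMeasure (μ.map Subtype.val) :=
    Measure.isProbabilityMeasure_map (by fun_prop)
  have : NullSingletonClass (μ.map Subtype.val) := ⟨fun x => by
    rw [Measure.map_apply measurable_subtype_coe (measurableSet_singleton x)]
    exact (subsingleton_singleton.preimage Subtype.val_injective).measure_zero μ⟩
  rw [funext (cdf01_eq_cdf_map μ)]
  exact (continuous_cdf _).comp continuous_subtype_val

theorem Icc_subset_range_cdf01 (μ : Measure UnitInt) [IsProbabilityMeasure μ]
    [NullSingletonClass μ] : Icc 0 1 ⊆ range (cdf01 μ) := by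
  have hbot : cdf01 μ ⊥ = 0 := by simp [cdf01, Iic_bot]
  have htop : cdf01 μ ⊤ = 1 := by simp [cdf01]
  simpa [hbot, htop] using intermediate_value_univ ⊥ ⊤ (continuous_cdf01 μ)

theorem strictMono_of_cdf01_comp_eq {μ ν : Measure UnitInt} [IsFiniteMeasure μ]
    [IsFiniteMeasure ν] [μ.IsOpenPosMeasure] [ν.IsOpenPosMeasure] {h : UnitInt → UnitInt}
    (hh : ∀ t, cdf01 μ (h t) = cdf01 ν t) : StrictMono h := fun s t hst =>
  (strictMono_cdf01 μ).lt_iff_lt.1 (by rw [hh, hh]; exact strictMono_cdf01 ν hst)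

theorem map_eq_of_cdf01_comp_eq {μ ν : Measure UnitInt} [IsProbabilityMeasure μ]
    [IsProbabilityMeasure ν] [NullSingletonClass ν] [μ.IsOpenPosMeasure] [ν.IsOpenPosMeasure]
    {h : UnitInt → UnitInt} (hh : ∀ t, cdf01 μ (h t) = cdf01 ν t) : ν.map h = μ := by
  have hmono := strictMono_of_cdf01_comp_eq hh
  refine Measure.ext_of_Iic _ _ fun x => ?_
  obtain ⟨t, ht⟩ := Icc_subset_range_cdf01 ν (show cdf01 μ x ∈ Icc 0 1 from
    ⟨ENNReal.toReal_nonneg, ENNReal.toReal_mono ENNReal.one_ne_top prob_le_one⟩)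
  have htx : h t = x := (strictMono_cdf01 μ).injective (by rw [hh, ht])
  have hpre : h ⁻¹' Iic x = Iic t := by ext s; simp [← htx, hmono.le_iff_le]
  rw [Measure.map_apply hmono.monotone.measurable measurableSet_Iic, hpre, ← htx]
  exact ((ENNReal.toReal_eq_toReal_iff' (measure_ne_top _ _) (measure_ne_top _ _)).1
    (hh t)).symm

noncomputable def absRpowDeriv (p u : ℝ) : ℝ := p * |u| ^ (p - 1) * SignType.sign u

theorem hasDerivAt_abs_rpow_of_ne_zero (p : ℝ) {u : ℝ} (hu : u ≠ 0) :
    HasDerivAt (fun v : ℝ => |v| ^ p) (absRpowDeriv p u) u :=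
  (Real.hasDerivAt_rpow_const (Or.inl (abs_ne_zero.2 hu))).comp u (hasDerivAt_abs hu)

theorem absRpowDeriv_neg (p u : ℝ) : absRpowDeriv p (-u) = -absRpowDeriv p u := by
  simp [absRpowDeriv, Left.sign_neg]

theorem absRpowDeriv_one (p : ℝ) : absRpowDeriv p 1 = p := by
  simp [absRpowDeriv]

theorem monotone_absRpowDeriv {p : ℝ} (hp : 1 ≤ p) : Monotone (absRpowDeriv p) := by
  refine monotone_of_odd_of_monotoneOn_nonneg (absRpowDeriv_neg p)
    fun u (hu : 0 ≤ u) v (hv : 0 ≤ v) huv => ?_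
  rcases hu.eq_or_lt with rfl | hu
  · rcases hv.eq_or_lt with rfl | hv
    · rfl
    · simp only [absRpowDeriv, abs_zero, sign_zero, SignType.coe_zero, mul_zero, sign_pos hv,
        SignType.coe_one, mul_one]
      exact mul_nonneg (by linarith) (by positivity)
  · simp only [absRpowDeriv, sign_pos hu, sign_pos (hu.trans_le huv), abs_of_pos hu,
      abs_of_nonneg hv, SignType.coe_one, mul_one]
    gcongr

theorem intervalIntegrable_absRpowDeriv_sub {p : ℝ} (hp : 1 ≤ p) (y a b : ℝ) :
    IntervalIntegrable (fun s => absRpowDeriv p (s - y)) volume a b :=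
  ((monotone_absRpowDeriv hp).comp fun _ _ hst => sub_le_sub_right hst y).intervalIntegrable

theorem integral_absRpowDeriv_sub {p : ℝ} (hp : 1 ≤ p) (y a b : ℝ) :
    ∫ s in a..b, absRpowDeriv p (s - y) = |b - y| ^ p - |a - y| ^ p := by
  refine integral_eq_of_hasDerivAt_off_countable (fun s => |s - y| ^ p) _ (countable_singleton y)
    ?_ (fun s hs => ?_) (intervalIntegrable_absRpowDeriv_sub hp y a b)
  · exact ((continuous_abs.rpow_const fun _ => Or.inr (by linarith)).comp
      (continuous_sub_right y)).continuousOn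
  · exact (hasDerivAt_abs_rpow_of_ne_zero p (sub_ne_zero.2 hs.2)).comp_sub_const s y

noncomputable def upperInv (h : UnitInt → UnitInt) (s : ℝ) : ℝ :=
  sSup (Subtype.val '' {y : UnitInt | (h y : ℝ) ≤ s})

theorem bddAbove_upperInv_set (h : UnitInt → UnitInt) (s : ℝ) :
    BddAbove (Subtype.val '' {y : UnitInt | (h y : ℝ) ≤ s}) :=
  ⟨1, by rintro _ ⟨y, -, rfl⟩; exact y.2.2⟩

theorem upperInv_nonneg (h : UnitInt → UnitInt) (s : ℝ) : 0 ≤ upperInv h s :=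
  Real.sSup_nonneg (by rintro _ ⟨y, -, rfl⟩; exact y.2.1)

theorem upperInv_le_one (h : UnitInt → UnitInt) (s : ℝ) : upperInv h s ≤ 1 :=
  Real.sSup_le (by rintro _ ⟨y, -, rfl⟩; exact y.2.2) zero_le_one

theorem monotone_upperInv (h : UnitInt → UnitInt) : Monotone (upperInv h) := by
  intro s s' hss'
  rcases eq_empty_or_nonempty {y : UnitInt | (h y : ℝ) ≤ s} with he | hne
  · rw [upperInv, he, image_empty, Real.sSup_empty]
    exact upperInv_nonneg h s'
  · exact csSup_le_csSup (bddAbove_upperInv_set h s') (hne.image _)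
      (image_mono fun y hy => le_trans hy hss')

theorem le_upperInv {h : UnitInt → UnitInt} {s : ℝ} {y : UnitInt} (hy : (h y : ℝ) ≤ s) :
    (y : ℝ) ≤ upperInv h s :=
  le_csSup (bddAbove_upperInv_set h s) ⟨y, hy, rfl⟩

theorem upperInv_le {h : UnitInt → UnitInt} (hmono : StrictMono h) {s : ℝ} {y : UnitInt}
    (hy : s ≤ (h y : ℝ)) : upperInv h s ≤ y := by
  refine Real.sSup_le ?_ y.2.1
  rintro _ ⟨t, ht, rfl⟩
  exact hmono.le_iff_le.1 (Subtype.coe_le_coe.1 (ht.trans hy))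

theorem intervalIntegral.integral_le_integral_of_le_right_of_le_left {f g : ℝ → ℝ} {a b : ℝ}
    (hf : IntervalIntegrable f volume a b) (hg : IntervalIntegrable g volume a b)
    (hright : ∀ s ∈ Icc a b, f s ≤ g s) (hleft : ∀ s ∈ Icc b a, g s ≤ f s) :
    ∫ s in a..b, f s ≤ ∫ s in a..b, g s := by
  rcases le_total a b with hab | hba
  · exact intervalIntegral.integral_mono_on hab hf hg hright
  · rw [intervalIntegral.integral_symm b a, intervalIntegral.integral_symm b a, neg_le_neg_iff]
    exact intervalIntegral.integral_mono_on hba hg.symm hf.symm hleft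

-- `s` is clamped to `[0,1]` only to keep the density bounded on all of `ℝ`.
noncomputable def potentialDeriv (p : ℝ) (h : UnitInt → UnitInt) (s : ℝ) : ℝ :=
  absRpowDeriv p (max 0 (min 1 s) - upperInv h s)

noncomputable def potential (p : ℝ) (h : UnitInt → UnitInt) (r : ℝ) : ℝ :=
  ∫ s in (0 : ℝ)..r, potentialDeriv p h s

section Potential

variable {p : ℝ}

theorem abs_potentialDeriv_le (hp : 1 ≤ p) (h : UnitInt → UnitInt) (s : ℝ) :
    |potentialDeriv p h s| ≤ p := by
  have h0 := upperInv_nonneg h s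
  have h1 := upperInv_le_one h s
  have hc0 : 0 ≤ max 0 (min 1 s) := le_max_left _ _
  have hc1 : max 0 (min 1 s) ≤ 1 := max_le zero_le_one (min_le_left _ _)
  have hlo : absRpowDeriv p (-1) ≤ potentialDeriv p h s :=
    monotone_absRpowDeriv hp (by linarith)
  have hhi : potentialDeriv p h s ≤ absRpowDeriv p 1 :=
    monotone_absRpowDeriv hp (by linarith)
  rw [absRpowDeriv_neg, absRpowDeriv_one] at hlo
  rw [absRpowDeriv_one] at hhi
  exact abs_le.2 ⟨hlo, hhi⟩

theorem intervalIntegrable_potentialDeriv (hp : 1 ≤ p) (h : UnitInt → UnitInt) (a b : ℝ) :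
    IntervalIntegrable (potentialDeriv p h) volume a b := by
  have hmeas : Measurable (potentialDeriv p h) :=
    (monotone_absRpowDeriv hp).measurable.comp
      ((by fun_prop : Measurable fun s : ℝ => max 0 (min 1 s)).sub
        (monotone_upperInv h).measurable)
  exact (intervalIntegrable_iff.2 (Measure.integrableOn_of_bounded
    (by rw [uIoc]; exact measure_Ioc_lt_top.ne) hmeas.aestronglyMeasurable
    (Filter.Eventually.of_forall fun s => abs_potentialDeriv_le hp h s)))

theorem continuous_potential (hp : 1 ≤ p) (h : UnitInt → UnitInt) : Continuous (potential p h) :=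
  intervalIntegral.continuous_primitive (intervalIntegrable_potentialDeriv hp h) 0

theorem abs_potential_le (hp : 1 ≤ p) (h : UnitInt → UnitInt) (x : UnitInt) :
    |potential p h x| ≤ p := by
  have := intervalIntegral.norm_integral_le_of_norm_le_const (a := 0) (b := x)
    (fun s _ => (Real.norm_eq_abs _).trans_le (abs_potentialDeriv_le hp h s))
  refine this.trans ?_
  rw [sub_zero, abs_of_nonneg x.2.1]
  exact mul_le_of_le_one_right (by linarith) x.2.2

theorem potentialDeriv_of_mem_Icc (h : UnitInt → UnitInt) {s : ℝ} (hs : s ∈ Icc (0 : ℝ) 1) :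
    potentialDeriv p h s = absRpowDeriv p (s - upperInv h s) := by
  rw [potentialDeriv, min_eq_right hs.2, max_eq_right hs.1]

theorem potentialDeriv_le (hp : 1 ≤ p) {h : UnitInt → UnitInt} {y : UnitInt} {s : ℝ}
    (hys : (h y : ℝ) ≤ s) (hs : s ≤ 1) :
    potentialDeriv p h s ≤ absRpowDeriv p (s - y) := by
  rw [potentialDeriv_of_mem_Icc h ⟨(h y).2.1.trans hys, hs⟩]
  exact monotone_absRpowDeriv hp (sub_le_sub_left (le_upperInv hys) s)

theorem le_potentialDeriv (hp : 1 ≤ p) {h : UnitInt → UnitInt} (hmono : StrictMono h)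
    {y : UnitInt} {s : ℝ} (hs : 0 ≤ s) (hsy : s ≤ h y) :
    absRpowDeriv p (s - y) ≤ potentialDeriv p h s := by
  rw [potentialDeriv_of_mem_Icc h ⟨hs, hsy.trans (h y).2.2⟩]
  exact monotone_absRpowDeriv hp (sub_le_sub_left (upperInv_le hmono hsy) s)

theorem potential_sub_potential_le (hp : 1 ≤ p) {h : UnitInt → UnitInt} (hmono : StrictMono h)
    (x y : UnitInt) :
    potential p h x - potential p h (h y) ≤ |(x : ℝ) - y| ^ p - |(h y : ℝ) - y| ^ p := by
  rw [potential, potential, intervalIntegral.integral_interval_sub_left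
    (intervalIntegrable_potentialDeriv hp h 0 _) (intervalIntegrable_potentialDeriv hp h 0 _),
    ← integral_absRpowDeriv_sub hp]
  refine intervalIntegral.integral_le_integral_of_le_right_of_le_left
    (intervalIntegrable_potentialDeriv hp h _ _)
    (intervalIntegrable_absRpowDeriv_sub hp y _ _) (fun s hs => ?_) (fun s hs => ?_)
  · exact potentialDeriv_le hp hs.1 (hs.2.trans x.2.2)
  · exact le_potentialDeriv hp hmono (x.2.1.trans hs.1) hs.2

end Potential

theorem integral_add_integral_le_of_coupling {α β : Type*} [MeasurableSpace α]
    [MeasurableSpace β]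
    {μ : Measure α} {ν : Measure β} {π : Measure (α × β)}
    (hfst : π.map Prod.fst = μ) (hsnd : π.map Prod.snd = ν) {φ : α → ℝ} {ψ : β → ℝ}
    {c : α × β → ℝ} (hφ : Integrable φ μ) (hψ : Integrable ψ ν) (hc : Integrable c π)
    (hle : ∀ x y, φ x + ψ y ≤ c (x, y)) :
    ∫ x, φ x ∂μ + ∫ y, ψ y ∂ν ≤ ∫ z, c z ∂π := by
  subst hfst hsnd
  have hφ' := hφ.comp_measurable measurable_fst
  have hψ' := hψ.comp_measurable measurable_snd
  rw [integral_map measurable_fst.aemeasurable hφ.aestronglyMeasurable,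
    integral_map measurable_snd.aemeasurable hψ.aestronglyMeasurable]
  exact (integral_add hφ' hψ').symm.trans_le
    (integral_mono (hφ'.add hψ') hc fun z => hle z.1 z.2)

theorem rpow_le_Wp {E : Type*} [MeasurableSpace E] [PseudoMetricSpace E] {μ ν : Measure E}
    [IsProbabilityMeasure μ] [IsProbabilityMeasure ν] {p A : ℝ} (hp : 0 ≤ p) (hA : 0 ≤ A)
    (hle : ∀ π : Measure (E × E), π.map Prod.fst = μ → π.map Prod.snd = ν →
      A ≤ ∫ z, dist z.1 z.2 ^ p ∂π) :
    A ^ (1 / p) ≤ Wp p μ ν := by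
  refine le_csInf ⟨_, μ.prod ν, ⟨?_, ?_⟩, rfl⟩ ?_
  · rw [Measure.map_fst_prod, measure_univ, one_smul]
  · rw [Measure.map_snd_prod, measure_univ, one_smul]
  · rintro _ ⟨π, ⟨hfst, hsnd⟩, rfl⟩
    exact Real.rpow_le_rpow hA (hle π hfst hsnd) (by positivity)

theorem dist_rpow_le_one {p : ℝ} (hp : 0 ≤ p) (x y : UnitInt) : dist x y ^ p ≤ 1 := by
  refine Real.rpow_le_one dist_nonneg ?_ hp
  rw [Subtype.dist_eq, Real.dist_eq, abs_le]
  constructor <;> linarith [x.2.1, x.2.2, y.2.1, y.2.2]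

theorem integral_dist_rpow_le_of_coupling {μ ν : Measure UnitInt} [IsProbabilityMeasure μ]
    [IsProbabilityMeasure ν] {h : UnitInt → UnitInt} (hmono : StrictMono h) (hmap : ν.map h = μ)
    {p : ℝ} (hp : 1 ≤ p) {π : Measure (UnitInt × UnitInt)} (hfst : π.map Prod.fst = μ)
    (hsnd : π.map Prod.snd = ν) :
    ∫ t, dist (h t) t ^ p ∂ν ≤ ∫ z, dist z.1 z.2 ^ p ∂π := by
  have : IsProbabilityMeasure (π.map Prod.fst) := hfst ▸ ‹_›
  have : IsProbabilityMeasure π := Measure.isProbabilityMeasure_of_map Prod.fst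
  have hp0 : 0 ≤ p := by linarith
  have hmeas : Measurable h := hmono.monotone.measurable
  have hcont : Continuous fun z : UnitInt × UnitInt => dist z.1 z.2 ^ p :=
    continuous_dist.rpow_const fun _ => Or.inr hp0
  set φ : UnitInt → ℝ := fun x => potential p h x
  set ψ : UnitInt → ℝ := fun y => dist (h y) y ^ p - φ (h y)
  have hφ : Integrable φ μ :=
    .of_bound ((continuous_potential hp h).comp continuous_subtype_val).aestronglyMeasurable p
      (ae_of_all _ (abs_potential_le hp h))
  have hφh : Integrable (fun t => φ (h t)) ν := (hmap ▸ hφ).comp_measurable hmeas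
  have hcost : Integrable (fun y => dist (h y) y ^ p) ν :=
    .of_bound (hcont.measurable.comp (hmeas.prodMk measurable_id)).aestronglyMeasurable 1
      (ae_of_all _ fun y => by
        rw [Real.norm_eq_abs, abs_of_nonneg (by positivity)]; exact dist_rpow_le_one hp0 _ _)
  have hc : Integrable (fun z : UnitInt × UnitInt => dist z.1 z.2 ^ p) π :=
    .of_bound hcont.aestronglyMeasurable 1 (ae_of_all _ fun z => by
      rw [Real.norm_eq_abs, abs_of_nonneg (by positivity)]; exact dist_rpow_le_one hp0 _ _)
  have hψ : Integrable ψ ν := hcost.sub hφh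
  calc ∫ t, dist (h t) t ^ p ∂ν = ∫ t, φ (h t) ∂ν + ∫ t, ψ t ∂ν := by
        rw [← integral_add hφh hψ]
        simp [ψ]
    _ = ∫ x, φ x ∂μ + ∫ y, ψ y ∂ν := by
        rw [← hmap, integral_map hmeas.aemeasurable (hmap ▸ hφ).aestronglyMeasurable]
    _ ≤ ∫ z, dist z.1 z.2 ^ p ∂π :=
        integral_add_integral_le_of_coupling hfst hsnd hφ hψ hc fun x y => by
          have := potential_sub_potential_le hp hmono x y
          simp only [φ, ψ, Subtype.dist_eq, Real.dist_eq]
          linarith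

theorem rearrangement_lp_norm_le_wasserstein_general
    (μ ν : Measure UnitInt) [IsProbabilityMeasure μ] [IsProbabilityMeasure ν]
    [NullSingletonClass ν]
    (hμ : ∀ U : Set UnitInt, IsOpen U → U.Nonempty → 0 < μ U)
    (hν : ∀ U : Set UnitInt, IsOpen U → U.Nonempty → 0 < ν U)
    (h : UnitInt → UnitInt) (hh : ∀ t : UnitInt, cdf01 μ (h t) = cdf01 ν t)
    (p : ℝ) (hp : 1 ≤ p) :
    (∫ t, |(h t : ℝ) - (t : ℝ)| ^ p ∂ν) ^ (1 / p) ≤ Wp p μ ν := by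
  have : μ.IsOpenPosMeasure := ⟨fun U hU hne => (hμ U hU hne).ne'⟩
  have : ν.IsOpenPosMeasure := ⟨fun U hU hne => (hν U hU hne).ne'⟩
  have hmono := strictMono_of_cdf01_comp_eq hh
  have hmap := map_eq_of_cdf01_comp_eq hh
  exact rpow_le_Wp (by linarith) (integral_nonneg fun t => by positivity)
    fun π hfst hsnd => by
      simpa [Subtype.dist_eq, Real.dist_eq] using
        integral_dist_rpow_le_of_coupling hmono hmap hp hfst hsnd

theorem rearrangement_lp_norm_le_wasserstein
    (μ ν : Measure UnitInt) [IsProbabilityMeasure μ] [IsProbabilityMeasure ν]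
    [NullSingletonClass μ] [NullSingletonClass ν]
    (hμ : ∀ U : Set UnitInt, IsOpen U → U.Nonempty → 0 < μ U)
    (hν : ∀ U : Set UnitInt, IsOpen U → U.Nonempty → 0 < ν U)
    (h : UnitInt → UnitInt) (hh : ∀ t : UnitInt, cdf01 μ (h t) = cdf01 ν t)
    (p : ℝ) (hp : 1 ≤ p) :
    (∫ t, |(h t : ℝ) - (t : ℝ)| ^ p ∂ν) ^ (1 / p) ≤ Wp p μ ν :=
  rearrangement_lp_norm_le_wasserstein_general μ ν hμ hν h hh p hp
end

section
/- For Borel probability measures μ, ν on ℝ with cumulative distribution functions F and G and p ∈ [1,∞), the p-Wasserstein distance equals the L^p distance of the quantile functions: W_p(μ,ν) = (∫_0^1 |F⁻¹(t) − G⁻¹(t)|^p dt)^{1/p}, where F⁻¹(t) = inf{x : F(x) > t}. -/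
open MeasureTheory

/-- The quantile function of a measure on `ℝ`: `F⁻¹(t) = inf {x : F(x) > t}`,
where `F(x) = μ((-∞, x])`. -/
noncomputable def quantile (μ : Measure ℝ) (t : ℝ) : ℝ :=
  sInf {x : ℝ | t < (μ (Set.Iic x)).toReal}

section Aux
open Set Filter Topology
open scoped ENNReal NNReal

namespace WassQ

noncomputable def g (p u : ℝ) : ℝ := if 0 ≤ u then p * u ^ (p-1) else -(p * (-u) ^ (p-1))

variable {p : ℝ}

lemma g_nonneg (hp : 1 ≤ p) {u : ℝ} (hu : 0 ≤ u) : 0 ≤ g p u := by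
  rw [g, if_pos hu]
  positivity

lemma g_nonpos (hp : 1 ≤ p) {u : ℝ} (hu : u < 0) : g p u ≤ 0 := by
  rw [g, if_neg (not_le.2 hu)]
  have h2 : (0:ℝ) ≤ p * (-u) ^ (p-1) := by
    have : (0:ℝ) ≤ (-u) ^ (p-1) := Real.rpow_nonneg (by linarith) _
    nlinarith
  linarith

lemma monotone_g (hp : 1 ≤ p) : Monotone (g p) := by
  intro u v huv
  rcases le_or_gt 0 u with hu | hu
  · rw [g, if_pos hu, g, if_pos (hu.trans huv)]
    have := Real.rpow_le_rpow hu huv (by linarith : (0:ℝ) ≤ p - 1)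
    nlinarith
  · rcases le_or_gt 0 v with hv | hv
    · exact (g_nonpos hp hu).trans (g_nonneg hp hv)
    · rw [g, if_neg (not_le.2 hu), g, if_neg (not_le.2 hv)]
      have := Real.rpow_le_rpow (by linarith : (0:ℝ) ≤ -v) (by linarith : -v ≤ -u)
        (by linarith : (0:ℝ) ≤ p - 1)
      nlinarith

lemma continuousAt_g (hp : 1 ≤ p) {u : ℝ} (hu : u ≠ 0) : ContinuousAt (g p) u := by
  rcases hu.lt_or_gt with hu | hu
  · have h1 : ContinuousAt (fun x : ℝ => -(p * (-x) ^ (p-1))) u := by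
      have := (Real.continuousAt_rpow_const (-u) (p-1) (Or.inl (by linarith))).comp
        (continuousAt_neg (x := u))
      exact ((continuousAt_const.mul this).neg)
    refine h1.congr ?_
    filter_upwards [eventually_lt_nhds hu] with x hx
    rw [g, if_neg (not_le.2 hx)]
  · have h1 : ContinuousAt (fun x : ℝ => p * x ^ (p-1)) u :=
      continuousAt_const.mul (Real.continuousAt_rpow_const u (p-1) (Or.inl (by linarith)))
    refine h1.congr ?_
    filter_upwards [eventually_gt_nhds hu] with x hx
    rw [g, if_pos hx.le]

lemma rightCont_g (hp : 1 ≤ p) (x : ℝ) : ContinuousWithinAt (g p) (Ici x) x := by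
  rcases eq_or_ne x 0 with rfl | hx
  · have h1 : ContinuousWithinAt (fun u : ℝ => p * u ^ (p-1)) (Ici 0) 0 :=
      (continuousAt_const.mul (Real.continuousAt_rpow_const 0 (p-1)
        (Or.inr (by linarith)))).continuousWithinAt
    refine h1.congr (fun y hy => ?_) ?_
    · rw [g, if_pos (mem_Ici.1 hy)]
    · rw [g, if_pos le_rfl]
  · exact (continuousAt_g hp hx).continuousWithinAt

noncomputable def gSt (p : ℝ) (hp : 1 ≤ p) : StieltjesFunction ℝ :=
  ⟨g p, monotone_g hp, rightCont_g hp⟩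

lemma leftLim_g (hp : 1 ≤ p) {u : ℝ} (hu : u ≠ 0) : Function.leftLim (g p) u = g p u :=
  leftLim_eq_of_tendsto
    ((continuousAt_g hp hu).tendsto.mono_left nhdsWithin_le_nhds)

lemma continuous_ell (hp : 1 ≤ p) : Continuous (fun x : ℝ => |x| ^ p) :=
  continuous_abs.rpow_const (fun x => Or.inr (by linarith))

lemma intervalIntegrable_g (hp : 1 ≤ p) (a b : ℝ) : IntervalIntegrable (g p) volume a b :=
  ((monotone_g hp).monotoneOn _).intervalIntegrable

lemma ftc_g_le (hp : 1 ≤ p) {a b : ℝ} (hab : a ≤ b) (h : 0 ≤ a ∨ b ≤ 0) :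
    ∫ u in a..b, g p u = |b| ^ p - |a| ^ p := by
  refine intervalIntegral.integral_eq_sub_of_hasDeriv_right_of_le hab
    ((continuous_ell hp).continuousOn) (fun x hx => ?_) (intervalIntegrable_g hp a b)
  rcases h with h | h
  · have hx0 : 0 < x := lt_of_le_of_lt h hx.1
    have h1 : HasDerivAt (fun y : ℝ => y ^ p) (p * x ^ (p-1)) x :=
      Real.hasDerivAt_rpow_const (Or.inl hx0.ne')
    have h2 : HasDerivAt (fun y : ℝ => |y| ^ p) (p * x ^ (p-1)) x := by
      refine h1.congr_of_eventuallyEq ?_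
      filter_upwards [eventually_gt_nhds hx0] with y hy
      rw [abs_of_pos hy]
    have : g p x = p * x ^ (p-1) := by rw [g, if_pos hx0.le]
    rw [this]
    exact h2.hasDerivWithinAt
  · have hx0 : x < 0 := lt_of_lt_of_le hx.2 h
    have h1 : HasDerivAt (fun y : ℝ => (-y) ^ p) (p * (-x) ^ (p-1) * (-1)) x :=
      (Real.hasDerivAt_rpow_const (Or.inl (by linarith : -x ≠ 0))).comp x (hasDerivAt_neg x)
    have h2 : HasDerivAt (fun y : ℝ => |y| ^ p) (p * (-x) ^ (p-1) * (-1)) x := by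
      refine h1.congr_of_eventuallyEq ?_
      filter_upwards [eventually_lt_nhds hx0] with y hy
      rw [abs_of_neg hy]
    have : g p x = p * (-x) ^ (p-1) * (-1) := by rw [g, if_neg (not_le.2 hx0)]; ring
    rw [this]
    exact h2.hasDerivWithinAt

lemma ftc_g (hp : 1 ≤ p) (a b : ℝ) : ∫ u in a..b, g p u = |b| ^ p - |a| ^ p := by
  have key : ∀ a b : ℝ, a ≤ b → ∫ u in a..b, g p u = |b| ^ p - |a| ^ p := by
    intro a b hab
    rcases le_or_gt 0 a with ha | ha
    · exact ftc_g_le hp hab (Or.inl ha)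
    · rcases le_or_gt b 0 with hb | hb
      · exact ftc_g_le hp hab (Or.inr hb)
      · have h1 := intervalIntegral.integral_add_adjacent_intervals
          (intervalIntegrable_g hp a 0) (intervalIntegrable_g hp 0 b)
        rw [ftc_g_le hp ha.le (Or.inr le_rfl), ftc_g_le hp hb.le (Or.inl le_rfl)] at h1
        rw [← h1]; ring
  rcases le_total a b with hab | hab
  · exact key a b hab
  · rw [intervalIntegral.integral_symm, key b a hab]; ring

noncomputable def e (x s : ℝ) : ℝ := (if s < x then 1 else 0) - (if s < 0 then 1 else 0)
noncomputable def sg (x : ℝ) : ℝ := if 0 ≤ x then 1 else -1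
def J (x : ℝ) : Set ℝ := Ico (x ⊓ 0) (x ⊔ 0)

lemma e_eq (x s : ℝ) : e x s = sg x * (J x).indicator 1 s := by
  rcases le_or_gt 0 x with hx | hx
  · rw [sg, if_pos hx, J, inf_eq_right.2 hx, sup_eq_left.2 hx, one_mul]
    rw [e, indicator_apply]
    simp only [mem_Ico, Pi.one_apply]
    split_ifs <;> simp_all <;> linarith
  · rw [sg, if_neg (not_le.2 hx), J, inf_eq_left.2 hx.le, sup_eq_right.2 hx.le]
    rw [e, indicator_apply]
    simp only [mem_Ico, Pi.one_apply]
    split_ifs <;> simp_all <;> linarith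

lemma abs_e (x s : ℝ) : |e x s| = (J x).indicator 1 s := by
  rw [e_eq, abs_mul]
  have h1 : |sg x| = 1 := by rw [sg]; split_ifs <;> simp
  have h2 : |(J x).indicator (1 : ℝ → ℝ) s| = (J x).indicator 1 s := by
    classical
    rw [indicator_apply]; split_ifs <;> simp
  rw [h1, h2, one_mul]

lemma sg_mul_sg (x : ℝ) : sg x * sg x = 1 := by rw [sg]; split_ifs <;> norm_num

lemma measurableSet_J (x : ℝ) : MeasurableSet (J x) := measurableSet_Ico

lemma shift_mem_J (x t u : ℝ) : (t + u ∈ J x) ↔ u ∈ Ico (x ⊓ 0 - t) (x ⊔ 0 - t) := by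
  simp only [J, mem_Ico]
  constructor <;> rintro ⟨h1, h2⟩ <;> constructor <;> linarith

lemma inner_int (hp : 1 ≤ p) (x t : ℝ) (ht1 : t ≠ x ⊓ 0) (ht2 : t ≠ x ⊔ 0) :
    ∫ u, e x (t + u) ∂(gSt p hp).measure = g p (x - t) - g p (-t) := by
  classical
  set A := x ⊓ 0 - t with hA
  set B := x ⊔ 0 - t with hB
  have hfun : ∀ u, e x (t + u) = sg x * (Ico A B).indicator 1 u := by
    intro u
    rw [e_eq]
    congr 1
    by_cases h : u ∈ Ico A B
    · rw [indicator_of_mem ((shift_mem_J x t u).2 h), indicator_of_mem h]; rfl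
    · rw [indicator_of_notMem (fun hh => h ((shift_mem_J x t u).1 hh)), indicator_of_notMem h]
  have hmeas : (gSt p hp).measure (Ico A B) = ENNReal.ofReal (g p B - g p A) := by
    rw [StieltjesFunction.measure_Ico]
    have h1 : Function.leftLim (g p) B = g p B :=
      leftLim_g hp (by simp only [hB]; intro h; apply ht2; linarith [sub_eq_zero.1 h])
    have h2 : Function.leftLim (g p) A = g p A :=
      leftLim_g hp (by simp only [hA]; intro h; apply ht1; linarith [sub_eq_zero.1 h])
    simp only [show (⇑(gSt p hp)) = g p from rfl, h1, h2]
  have hAB : A ≤ B := by simp only [hA, hB]; have := inf_le_sup (a := x) (b := (0:ℝ)); linarith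
  calc ∫ u, e x (t + u) ∂(gSt p hp).measure
      = ∫ u, sg x * (Ico A B).indicator 1 u ∂(gSt p hp).measure := by
        exact integral_congr_ae (Eventually.of_forall hfun)
    _ = sg x * ∫ u, (Ico A B).indicator 1 u ∂(gSt p hp).measure := integral_const_mul _ _
    _ = sg x * ∫ u, (Ico A B).indicator (fun _ => (1:ℝ)) u ∂(gSt p hp).measure := rfl
    _ = sg x * (g p B - g p A) := by
        rw [integral_indicator_const (1 : ℝ) measurableSet_Ico, measureReal_def, hmeas, smul_eq_mul, mul_one,
          ENNReal.toReal_ofReal (by linarith [monotone_g hp hAB])]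
    _ = g p (x - t) - g p (-t) := by
        rcases le_or_gt 0 x with hx | hx
        · rw [sg, if_pos hx, hA, hB, inf_eq_right.2 hx, sup_eq_left.2 hx, one_mul, zero_sub]
        · rw [sg, if_neg (not_le.2 hx), hA, hB, inf_eq_left.2 hx.le, sup_eq_right.2 hx.le]
          ring_nf

def W (x y : ℝ) : Set (ℝ × ℝ) := ((fun q : ℝ × ℝ => q.1 + q.2) ⁻¹' J x) ∩ (Prod.fst ⁻¹' J y)

lemma measurableSet_W (x y : ℝ) : MeasurableSet (W x y) :=
  ((measurable_fst.add measurable_snd) (measurableSet_J x)).inter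
    (measurable_fst (measurableSet_J y))

lemma ee_eq (x y : ℝ) (q : ℝ × ℝ) :
    e x (q.1 + q.2) * e y q.1 = (sg x * sg y) * (W x y).indicator (fun _ => (1:ℝ)) q := by
  rw [e_eq, e_eq]
  by_cases h1 : q.1 + q.2 ∈ J x <;> by_cases h2 : q.1 ∈ J y
  · have hW : q ∈ W x y := Set.mem_inter h1 h2
    rw [indicator_of_mem h1, indicator_of_mem h2, indicator_of_mem hW]
    simp only [Pi.one_apply]; ring
  · have hW : q ∉ W x y := fun h => h2 h.2
    rw [indicator_of_notMem h2, indicator_of_notMem hW]; ring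
  · have hW : q ∉ W x y := fun h => h1 h.1
    rw [indicator_of_notMem h1, indicator_of_notMem hW]; ring
  · have hW : q ∉ W x y := fun h => h1 h.1
    rw [indicator_of_notMem h1, indicator_of_notMem hW]; ring

lemma W_subset (x y : ℝ) : W x y ⊆ (J y) ×ˢ Ico (x ⊓ 0 - y ⊔ 0 - 1) (x ⊔ 0 - y ⊓ 0) := by
  rintro ⟨t, u⟩ ⟨h1, h2⟩
  simp only [J, mem_Ico, mem_preimage] at h1 h2
  refine ⟨by simpa [J, mem_Ico] using h2, ?_⟩
  simp only [mem_Ico]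
  exact ⟨by linarith [h1.1, h2.2], by linarith [h1.2, h2.1]⟩

lemma omega_W_lt_top (hp : 1 ≤ p) (x y : ℝ) :
    ((volume : Measure ℝ).prod (gSt p hp).measure) (W x y) < ⊤ := by
  refine lt_of_le_of_lt (measure_mono (W_subset x y)) ?_
  rw [Measure.prod_prod]
  apply ENNReal.mul_lt_top
  · rw [J, Real.volume_Ico]; exact ENNReal.ofReal_lt_top
  · rw [StieltjesFunction.measure_Ico]; exact ENNReal.ofReal_lt_top

lemma integrable_ee (hp : 1 ≤ p) (x y : ℝ) :
    Integrable (fun q : ℝ × ℝ => e x (q.1 + q.2) * e y q.1)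
      ((volume : Measure ℝ).prod (gSt p hp).measure) := by
  have : (fun q : ℝ × ℝ => e x (q.1 + q.2) * e y q.1)
      = fun q => (sg x * sg y) * (W x y).indicator (fun _ => (1:ℝ)) q := by
    funext q; exact ee_eq x y q
  rw [this]
  refine Integrable.const_mul ?_ _
  rw [integrable_indicator_iff (measurableSet_W x y)]
  exact integrableOn_const (omega_W_lt_top hp x y).ne

lemma outer_int (hp : 1 ≤ p) (x y : ℝ) :
    ∫ t : ℝ, (g p (x - t) - g p (-t)) * e y t = |x| ^ p + |y| ^ p - |x - y| ^ p := by
  set a := y ⊓ 0 with ha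
  set b := y ⊔ 0 with hb
  have hab : a ≤ b := inf_le_sup
  have hJ : J y = Ico a b := rfl
  have h1 : ∀ t, (g p (x - t) - g p (-t)) * e y t
      = sg y * (Ico a b).indicator (fun t => g p (x - t) - g p (-t)) t := by
    intro t
    rw [e_eq, hJ]
    by_cases h : t ∈ Ico a b
    · rw [indicator_of_mem h, indicator_of_mem h]; simp only [Pi.one_apply]; ring
    · rw [indicator_of_notMem h, indicator_of_notMem h]; ring
  have hint1 : IntervalIntegrable (fun t => g p (x - t)) volume a b := by
    apply AntitoneOn.intervalIntegrable
    intro s hs t ht hst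
    exact monotone_g hp (by linarith)
  have hint2 : IntervalIntegrable (fun t => g p (-t)) volume a b := by
    apply AntitoneOn.intervalIntegrable
    intro s hs t ht hst
    exact monotone_g hp (by linarith)
  calc ∫ t : ℝ, (g p (x - t) - g p (-t)) * e y t
      = ∫ t : ℝ, sg y * (J y).indicator (fun t => g p (x - t) - g p (-t)) t :=
        integral_congr_ae (Eventually.of_forall h1)
    _ = sg y * ∫ t : ℝ, (Ico a b).indicator (fun t => g p (x - t) - g p (-t)) t :=
        integral_const_mul _ _
    _ = sg y * ∫ t in Ico a b, (g p (x - t) - g p (-t)) := by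
        rw [integral_indicator measurableSet_Ico]
    _ = sg y * ∫ t in Ioc a b, (g p (x - t) - g p (-t)) := by
        rw [integral_Ico_eq_integral_Ioo, ← integral_Ioc_eq_integral_Ioo]
    _ = sg y * ∫ t in a..b, (g p (x - t) - g p (-t)) := by
        rw [intervalIntegral.integral_of_le hab]
    _ = sg y * ((∫ t in a..b, g p (x - t)) - ∫ t in a..b, g p (-t)) := by
        rw [intervalIntegral.integral_sub hint1 hint2]
    _ = sg y * ((|x - a| ^ p - |x - b| ^ p) - (|a| ^ p - |b| ^ p)) := by
        rw [intervalIntegral.integral_comp_sub_left (g p) x, ftc_g hp]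
        have : (fun t => g p (-t)) = fun t => g p (0 - t) := by funext t; rw [zero_sub]
        rw [this, intervalIntegral.integral_comp_sub_left (g p) 0, ftc_g hp, zero_sub, zero_sub,
          abs_neg, abs_neg]
    _ = |x| ^ p + |y| ^ p - |x - y| ^ p := by
        have h0 : |(0:ℝ)| ^ p = 0 := by
          rw [abs_zero]; exact Real.zero_rpow (by linarith)
        rcases le_or_gt 0 y with hy | hy
        · rw [sg, if_pos hy, ha, hb, inf_eq_right.2 hy, sup_eq_left.2 hy]
          rw [sub_zero, h0]
          ring
        · rw [sg, if_neg (not_le.2 hy), ha, hb, inf_eq_left.2 hy.le, sup_eq_right.2 hy.le]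
          rw [sub_zero, h0, abs_sub_comm x y]
          ring

lemma pairing_eq (hp : 1 ≤ p) (x y : ℝ) :
    ∫ q : ℝ × ℝ, e x (q.1 + q.2) * e y q.1 ∂((volume : Measure ℝ).prod (gSt p hp).measure)
      = |x| ^ p + |y| ^ p - |x - y| ^ p := by
  rw [MeasureTheory.integral_prod _ (integrable_ee hp x y)]
  have hae : ∀ᵐ t : ℝ ∂(volume : Measure ℝ), t ∉ ({x ⊓ 0, x ⊔ 0} : Set ℝ) := by
    rw [ae_iff]
    have h2 : {t : ℝ | ¬ t ∉ ({x ⊓ 0, x ⊔ 0} : Set ℝ)} = {x ⊓ 0, x ⊔ 0} := by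
      ext t; simp only [mem_setOf_eq, not_not]
    rw [h2]
    exact Set.Finite.measure_zero ((Set.finite_singleton _).insert _) volume
  have : ∫ t : ℝ, ∫ u : ℝ, e x (t + u) * e y t ∂(gSt p hp).measure
      = ∫ t : ℝ, (g p (x - t) - g p (-t)) * e y t := by
    refine integral_congr_ae ?_
    filter_upwards [hae] with t ht
    rw [integral_mul_const, inner_int hp x t (fun h => ht (by rw [h]; exact mem_insert _ _))
      (fun h => ht (by rw [h]; exact mem_insert_of_mem _ rfl))]
  rw [this, outer_int hp x y]

noncomputable def F (μ : Measure ℝ) (x : ℝ) : ℝ := (μ (Iic x)).toReal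

section CDF
variable {μ : Measure ℝ} [IsProbabilityMeasure μ]

lemma F_nonneg (x : ℝ) : 0 ≤ F μ x := ENNReal.toReal_nonneg

lemma F_le_one (x : ℝ) : F μ x ≤ 1 := by
  rw [F]
  have := prob_le_one (μ := μ) (s := Iic x)
  calc (μ (Iic x)).toReal ≤ (1 : ℝ≥0∞).toReal :=
        ENNReal.toReal_mono ENNReal.one_ne_top this
    _ = 1 := by simp

lemma F_mono : Monotone (F μ) := fun x y hxy =>
  ENNReal.toReal_mono (measure_ne_top μ _) (measure_mono (Iic_subset_Iic.2 hxy))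

lemma ofReal_F (x : ℝ) : ENNReal.ofReal (F μ x) = μ (Iic x) :=
  ENNReal.ofReal_toReal (measure_ne_top μ _)

lemma F_tendsto_atBot : Tendsto (F μ) atBot (𝓝 0) := by
  have h1 : Tendsto (fun x : ℝ => μ (Iic x)) atBot (𝓝 (μ (⋂ x : ℝ, Iic x))) := by
    refine tendsto_measure_iInter_atBot (fun i => nullMeasurableSet_Iic) (fun i j hij => Iic_subset_Iic.2 hij) ⟨0, measure_ne_top μ _⟩
  have h2 : (⋂ x : ℝ, Iic x) = ∅ := by
    ext y; simp only [mem_iInter, mem_Iic, mem_empty_iff_false, iff_false, not_forall]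
    exact ⟨y - 1, by push_neg; linarith⟩
  rw [h2, measure_empty] at h1
  have := (ENNReal.tendsto_toReal ENNReal.zero_ne_top).comp h1
  simpa [show F μ = fun x => (μ (Iic x)).toReal from rfl, Function.comp_def] using this

lemma F_tendsto_atTop : Tendsto (F μ) atTop (𝓝 1) := by
  have h1 := tendsto_measure_Iic_atTop (μ := μ)
  rw [measure_univ] at h1
  have := (ENNReal.tendsto_toReal ENNReal.one_ne_top).comp h1
  simpa [show F μ = fun x => (μ (Iic x)).toReal from rfl, Function.comp_def] using this

lemma exists_F_lt {t : ℝ} (ht : 0 < t) : ∃ x : ℝ, F μ x < t := by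
  have := F_tendsto_atBot (μ := μ)
  have h2 : ∀ᶠ x : ℝ in atBot, F μ x < t := this.eventually_lt_const ht
  exact h2.exists

lemma exists_lt_F {t : ℝ} (ht : t < 1) : ∃ x : ℝ, t < F μ x := by
  have := F_tendsto_atTop (μ := μ)
  have h2 : ∀ᶠ x : ℝ in atTop, t < F μ x := this.eventually_const_lt ht
  exact h2.exists

lemma bddBelow_Fset {t : ℝ} (ht : 0 < t) : BddBelow {x : ℝ | t < F μ x} := by
  obtain ⟨x₀, hx₀⟩ := exists_F_lt (μ := μ) ht
  refine ⟨x₀, fun x hx => ?_⟩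
  by_contra h
  push_neg at h
  have h2 : F μ x ≤ F μ x₀ := F_mono h.le
  simp only [mem_setOf_eq] at hx
  linarith

lemma nonempty_Fset {t : ℝ} (ht : t < 1) : {x : ℝ | t < F μ x}.Nonempty :=
  (exists_lt_F ht).imp (fun _ h => h)

lemma quantile_le {t x : ℝ} (ht : 0 < t) (h : t < F μ x) : quantile μ t ≤ x :=
  csInf_le (bddBelow_Fset ht) h

lemma F_right_lim (x : ℝ) :
    Tendsto (fun n : ℕ => F μ (x + 1 / (n + 1))) atTop (𝓝 (F μ x)) := by
  have h1 : Tendsto (fun n : ℕ => μ (Iic (x + 1 / (n + 1)))) atTop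
      (𝓝 (μ (⋂ n : ℕ, Iic (x + 1 / (n + 1))))) := by
    refine tendsto_measure_iInter_atTop (fun n => nullMeasurableSet_Iic) ?_ ⟨0, measure_ne_top μ _⟩
    intro n m hnm
    apply Iic_subset_Iic.2
    have h2 : (1 : ℝ) / (m + 1) ≤ 1 / (n + 1) := by
      apply one_div_le_one_div_of_le (by positivity)
      have : (n:ℝ) ≤ m := Nat.cast_le.2 hnm
      linarith
    linarith
  have h2 : (⋂ n : ℕ, Iic (x + 1 / (n + 1))) = Iic x := by
    ext y
    simp only [mem_iInter, mem_Iic]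
    constructor
    · intro h
      by_contra hy
      push_neg at hy
      obtain ⟨n, hn⟩ := exists_nat_one_div_lt (show (0:ℝ) < y - x by linarith)
      linarith [h n]
    · intro h n
      have : (0:ℝ) < 1 / (n + 1) := by positivity
      linarith
  rw [h2] at h1
  exact (ENNReal.tendsto_toReal (measure_ne_top μ _)).comp h1

lemma le_F_of_quantile_le {t x : ℝ} (ht : t < 1) (h : quantile μ t ≤ x) : t ≤ F μ x := by
  have key : ∀ y, x < y → t < F μ y := by
    intro y hy
    obtain ⟨z, hz, hzy⟩ := exists_lt_of_csInf_lt (nonempty_Fset ht) (lt_of_le_of_lt h hy)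
    exact lt_of_lt_of_le hz (F_mono hzy.le)
  have h1 : ∀ n : ℕ, t < F μ (x + 1 / (n + 1)) := by
    intro n
    refine key _ ?_
    have : (0:ℝ) < 1 / ((n:ℝ) + 1) := by positivity
    linarith
  exact ge_of_tendsto (F_right_lim x) (Eventually.of_forall (fun n => (h1 n).le))

lemma quantile_lt_of_lt_F {t x : ℝ} (ht : t < 1) (h : F μ x < t) : x < quantile μ t := by
  by_contra hc
  push_neg at hc
  exact absurd (le_F_of_quantile_le ht hc) (not_le.2 h)

lemma monotoneOn_quantile : MonotoneOn (quantile μ) (Ioo (0:ℝ) 1) := by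
  intro s hs t ht hst
  refine csInf_le_csInf (bddBelow_Fset hs.1) (nonempty_Fset ht.2) ?_
  intro x hx
  exact lt_of_le_of_lt hst hx

end CDF

noncomputable def qext (μ : Measure ℝ) : ℝ → ℝ :=
  fun t => if t ∈ Ioo (0:ℝ) 1 then quantile μ t else 0

lemma measurable_qext (μ : Measure ℝ) [IsProbabilityMeasure μ] : Measurable (qext μ) := by
  classical
  apply measurable_of_Ioi
  intro c
  have hA : MeasurableSet {t : ℝ | t ∈ Ioo (0:ℝ) 1 ∧ c < quantile μ t} := by
    apply Set.OrdConnected.measurableSet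
    constructor
    intro s hs t ht z hz
    have hzo : z ∈ Ioo (0:ℝ) 1 := ⟨lt_of_lt_of_le hs.1.1 hz.1, lt_of_le_of_lt hz.2 ht.1.2⟩
    exact ⟨hzo, lt_of_lt_of_le hs.2 (monotoneOn_quantile hs.1 hzo hz.1)⟩
  have hset : qext μ ⁻¹' Ioi c
      = {t : ℝ | t ∈ Ioo (0:ℝ) 1 ∧ c < quantile μ t} ∪ ((Ioo (0:ℝ) 1)ᶜ ∩ {t : ℝ | c < 0}) := by
    ext t
    by_cases h : t ∈ Ioo (0:ℝ) 1
    · simp only [qext, if_pos h, mem_preimage, mem_Ioi, mem_union, mem_setOf_eq, mem_inter_iff,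
        mem_compl_iff]
      constructor
      · intro hc; exact Or.inl ⟨h, hc⟩
      · rintro (⟨_, hc⟩ | ⟨hc, _⟩)
        · exact hc
        · exact absurd h hc
    · simp only [qext, if_neg h, mem_preimage, mem_Ioi, mem_union, mem_setOf_eq, mem_inter_iff,
        mem_compl_iff]
      constructor
      · intro hc; exact Or.inr ⟨h, hc⟩
      · rintro (⟨hm, _⟩ | ⟨_, hc⟩)
        · exact absurd hm h
        · exact hc
  rw [hset]
  refine hA.union (measurableSet_Ioo.compl.inter ?_)
  by_cases hc : c < 0
  · have : {t : ℝ | c < 0} = univ := by ext; simp [hc]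
    rw [this]; exact MeasurableSet.univ
  · have : {t : ℝ | c < 0} = ∅ := by ext; simp [hc]
    rw [this]; exact MeasurableSet.empty

lemma aemeasurable_quantile (μ : Measure ℝ) [IsProbabilityMeasure μ] :
    AEMeasurable (quantile μ) (volume.restrict (Ioo (0:ℝ) 1)) := by
  refine ⟨qext μ, measurable_qext μ, ?_⟩
  rw [EventuallyEq, ae_restrict_iff' measurableSet_Ioo]
  exact Eventually.of_forall (fun t ht => by rw [qext, if_pos ht])

lemma map_quantile (μ : Measure ℝ) [IsProbabilityMeasure μ] :
    Measure.map (quantile μ) (volume.restrict (Ioo (0:ℝ) 1)) = μ := by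
  haveI hPm : IsProbabilityMeasure (Measure.map (quantile μ) (volume.restrict (Ioo (0:ℝ) 1))) := by
    constructor
    rw [Measure.map_apply_of_aemeasurable (aemeasurable_quantile μ) MeasurableSet.univ]
    simp
  refine Measure.ext_of_Iic _ _ (fun x => ?_)
  rw [Measure.map_apply_of_aemeasurable (aemeasurable_quantile μ) measurableSet_Iic]
  have hF0 : 0 ≤ F μ x := F_nonneg x
  have hF1 : F μ x ≤ 1 := F_le_one x
  apply le_antisymm
  · have hsub : quantile μ ⁻¹' Iic x ⊆ Iic (F μ x) ∪ (Ioo (0:ℝ) 1)ᶜ := by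
      intro t ht
      by_cases h : t ∈ Ioo (0:ℝ) 1
      · exact Or.inl (le_F_of_quantile_le h.2 ht)
      · exact Or.inr h
    calc (volume.restrict (Ioo (0:ℝ) 1)) (quantile μ ⁻¹' Iic x)
        ≤ (volume.restrict (Ioo (0:ℝ) 1)) (Iic (F μ x) ∪ (Ioo (0:ℝ) 1)ᶜ) := measure_mono hsub
      _ = volume ((Iic (F μ x) ∪ (Ioo (0:ℝ) 1)ᶜ) ∩ Ioo (0:ℝ) 1) := by
          rw [Measure.restrict_apply (measurableSet_Iic.union measurableSet_Ioo.compl)]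
      _ ≤ volume (Ioc (0:ℝ) (F μ x)) := by
          apply measure_mono
          rintro t ⟨ht1 | ht1, ht2⟩
          · exact ⟨ht2.1, ht1⟩
          · exact absurd ht2 ht1
      _ = ENNReal.ofReal (F μ x) := by rw [Real.volume_Ioc, sub_zero]
      _ = μ (Iic x) := ofReal_F x
  · have hsub : Ioo (0:ℝ) (F μ x) ⊆ quantile μ ⁻¹' Iic x ∩ Ioo (0:ℝ) 1 := by
      intro t ht
      have ht1 : t ∈ Ioo (0:ℝ) 1 := ⟨ht.1, lt_of_lt_of_le ht.2 hF1⟩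
      exact ⟨quantile_le ht.1 ht.2, ht1⟩
    calc μ (Iic x) = ENNReal.ofReal (F μ x) := (ofReal_F x).symm
      _ = volume (Ioo (0:ℝ) (F μ x)) := by rw [Real.volume_Ioo, sub_zero]
      _ ≤ (volume.restrict (Ioo (0:ℝ) 1)) (quantile μ ⁻¹' Iic x) := by
          rw [← Measure.restrict_eq_self volume
            (show Ioo (0:ℝ) (F μ x) ⊆ Ioo (0:ℝ) 1 from fun t ht => ⟨ht.1, lt_of_lt_of_le ht.2 hF1⟩)]
          exact le_trans (measure_mono (hsub.trans inter_subset_left)) le_rfl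

def D (s t : ℝ) : Set (ℝ × ℝ) := {z : ℝ × ℝ | s < z.1 ∧ t < z.2}

lemma measurableSet_D (s t : ℝ) : MeasurableSet (D s t) :=
  ((measurable_fst (measurableSet_Ioi : MeasurableSet (Ioi s)))).inter
    ((measurable_snd (measurableSet_Ioi : MeasurableSet (Ioi t))))

section Coupling
variable {μ ν : Measure ℝ} [IsProbabilityMeasure μ] [IsProbabilityMeasure ν]
  {σ : Measure (ℝ × ℝ)}

lemma coupling_prob (h1 : σ.map Prod.fst = μ) : IsProbabilityMeasure σ := by
  constructor
  have := Measure.map_apply (μ := σ) measurable_fst MeasurableSet.univ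
  rw [h1] at this
  rw [← measure_univ (μ := μ), this]
  rfl

lemma integrable_indicator_of_finite {S : Set (ℝ × ℝ)} (hS : MeasurableSet S)
    [IsFiniteMeasure σ] : Integrable (S.indicator (fun _ => (1:ℝ))) σ := by
  rw [integrable_indicator_iff hS]
  exact integrableOn_const (measure_lt_top σ S).ne

lemma I_expand (h1 : σ.map Prod.fst = μ) (h2 : σ.map Prod.snd = ν) (s t : ℝ) :
    ∫ z : ℝ × ℝ, e z.1 s * e z.2 t ∂σ
      = (σ (D s t)).toReal
        - (if t < 0 then (1:ℝ) else 0) * (μ (Ioi s)).toReal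
        - (if s < 0 then (1:ℝ) else 0) * (ν (Ioi t)).toReal
        + (if s < 0 then (1:ℝ) else 0) * (if t < 0 then (1:ℝ) else 0) := by
  haveI : IsProbabilityMeasure σ := coupling_prob h1
  set c1 : ℝ := if s < 0 then 1 else 0 with hc1
  set c2 : ℝ := if t < 0 then 1 else 0 with hc2
  have hptw : ∀ z : ℝ × ℝ, e z.1 s * e z.2 t
      = (D s t).indicator (fun _ => (1:ℝ)) z
        - c2 * (Prod.fst ⁻¹' Ioi s).indicator (fun _ => (1:ℝ)) z
        - c1 * (Prod.snd ⁻¹' Ioi t).indicator (fun _ => (1:ℝ)) z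
        + c1 * c2 := by
    intro z
    rw [e, e]
    have hD : (D s t).indicator (fun _ => (1:ℝ)) z
        = (if s < z.1 then (1:ℝ) else 0) * (if t < z.2 then (1:ℝ) else 0) := by
      by_cases h : z ∈ D s t
      · rw [indicator_of_mem h, if_pos h.1, if_pos h.2, one_mul]
      · rw [indicator_of_notMem h]
        rw [D, mem_setOf_eq, not_and_or] at h
        rcases h with h | h
        · rw [if_neg h, zero_mul]
        · rw [if_neg h, mul_zero]
    have hA : (Prod.fst ⁻¹' Ioi s).indicator (fun _ => (1:ℝ)) z
        = (if s < z.1 then (1:ℝ) else 0) := by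
      by_cases h : s < z.1
      · rw [indicator_of_mem (show z ∈ Prod.fst ⁻¹' Ioi s from h), if_pos h]
      · rw [indicator_of_notMem (show z ∉ Prod.fst ⁻¹' Ioi s from h), if_neg h]
    have hB : (Prod.snd ⁻¹' Ioi t).indicator (fun _ => (1:ℝ)) z
        = (if t < z.2 then (1:ℝ) else 0) := by
      by_cases h : t < z.2
      · rw [indicator_of_mem (show z ∈ Prod.snd ⁻¹' Ioi t from h), if_pos h]
      · rw [indicator_of_notMem (show z ∉ Prod.snd ⁻¹' Ioi t from h), if_neg h]
    rw [hD, hA, hB]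
    ring
  have hiD := integrable_indicator_of_finite (σ := σ) (measurableSet_D s t)
  have hiA := integrable_indicator_of_finite (σ := σ)
    (measurable_fst (measurableSet_Ioi : MeasurableSet (Ioi s)))
  have hiB := integrable_indicator_of_finite (σ := σ)
    (measurable_snd (measurableSet_Ioi : MeasurableSet (Ioi t)))
  calc ∫ z : ℝ × ℝ, e z.1 s * e z.2 t ∂σ
      = ∫ z : ℝ × ℝ, ((D s t).indicator (fun _ => (1:ℝ)) z
          - c2 * (Prod.fst ⁻¹' Ioi s).indicator (fun _ => (1:ℝ)) z
          - c1 * (Prod.snd ⁻¹' Ioi t).indicator (fun _ => (1:ℝ)) z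
          + c1 * c2) ∂σ := integral_congr_ae (Eventually.of_forall hptw)
    _ = (σ (D s t)).toReal - c2 * (μ (Ioi s)).toReal - c1 * (ν (Ioi t)).toReal + c1 * c2 := by
        have hf1 : Integrable (fun z : ℝ × ℝ => (D s t).indicator (fun _ => (1:ℝ)) z
            - c2 * (Prod.fst ⁻¹' Ioi s).indicator (fun _ => (1:ℝ)) z
            - c1 * (Prod.snd ⁻¹' Ioi t).indicator (fun _ => (1:ℝ)) z) σ :=
          (hiD.sub (hiA.const_mul c2)).sub (hiB.const_mul c1)
        have hf2 : Integrable (fun z : ℝ × ℝ => (D s t).indicator (fun _ => (1:ℝ)) z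
            - c2 * (Prod.fst ⁻¹' Ioi s).indicator (fun _ => (1:ℝ)) z) σ :=
          hiD.sub (hiA.const_mul c2)
        rw [integral_add hf1 (integrable_const _),
          integral_sub hf2 (hiB.const_mul c1),
          integral_sub hiD (hiA.const_mul c2),
          integral_const_mul, integral_const_mul,
          integral_indicator_const (1:ℝ) (measurableSet_D s t),
          integral_indicator_const (1:ℝ) (measurable_fst measurableSet_Ioi),
          integral_indicator_const (1:ℝ) (measurable_snd measurableSet_Ioi),
          integral_const]
        have hμ' : σ (Prod.fst ⁻¹' Ioi s) = μ (Ioi s) := by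
          rw [← h1, Measure.map_apply measurable_fst measurableSet_Ioi]
        have hν' : σ (Prod.snd ⁻¹' Ioi t) = ν (Ioi t) := by
          rw [← h2, Measure.map_apply measurable_snd measurableSet_Ioi]
        simp only [measureReal_def]
        rw [hμ', hν']
        simp [measure_univ]

lemma coupling_D_le (h1 : σ.map Prod.fst = μ) (h2 : σ.map Prod.snd = ν) (s t : ℝ) :
    σ (D s t) ≤ μ (Ioi s) ⊓ ν (Ioi t) := by
  refine le_inf ?_ ?_
  · rw [← h1, Measure.map_apply measurable_fst measurableSet_Ioi]
    exact measure_mono (fun z hz => hz.1)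
  · rw [← h2, Measure.map_apply measurable_snd measurableSet_Ioi]
    exact measure_mono (fun z hz => hz.2)

lemma measure_Ioi_eq (s : ℝ) : μ (Ioi s) = ENNReal.ofReal (1 - F μ s) := by
  have h1 : Ioi s = (Iic s)ᶜ := by ext z; simp
  rw [h1, measure_compl measurableSet_Iic (measure_ne_top μ _), measure_univ,
    ENNReal.ofReal_sub _ (F_nonneg s), ofReal_F, ENNReal.ofReal_one]

end Coupling

lemma measurable_ell (hp : 1 ≤ p) : Measurable (fun x : ℝ => |x| ^ p) :=
  (continuous_ell hp).measurable

lemma ell_sub_bound (hp : 1 ≤ p) (x y : ℝ) :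
    |x - y| ^ p ≤ 2 ^ p * (|x| ^ p + |y| ^ p) := by
  have h0 : (0:ℝ) ≤ p := by linarith
  have h1 : |x - y| ≤ 2 * max |x| |y| := by
    have := abs_sub x y
    rcases le_total |x| |y| with h | h
    · rw [max_eq_right h]; linarith [abs_sub_abs_le_abs_sub x y, abs_sub x y]
    · rw [max_eq_left h]; linarith [abs_sub x y]
  have h2 : |x - y| ^ p ≤ (2 * max |x| |y|) ^ p :=
    Real.rpow_le_rpow (abs_nonneg _) h1 h0
  have h3 : (2 * max |x| |y|) ^ p = 2 ^ p * (max |x| |y|) ^ p :=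
    Real.mul_rpow (by norm_num) (le_max_of_le_left (abs_nonneg _))
  have h4 : (max |x| |y|) ^ p ≤ |x| ^ p + |y| ^ p := by
    rcases le_total |x| |y| with h | h
    · rw [max_eq_right h]
      have : (0:ℝ) ≤ |x| ^ p := Real.rpow_nonneg (abs_nonneg _) _
      linarith
    · rw [max_eq_left h]
      have : (0:ℝ) ≤ |y| ^ p := Real.rpow_nonneg (abs_nonneg _) _
      linarith
  calc |x - y| ^ p ≤ (2 * max |x| |y|) ^ p := h2
    _ = 2 ^ p * (max |x| |y|) ^ p := h3
    _ ≤ 2 ^ p * (|x| ^ p + |y| ^ p) := by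
        apply mul_le_mul_of_nonneg_left h4 (Real.rpow_nonneg (by norm_num) _)

lemma measurable_e2 : Measurable (fun w : ℝ × ℝ => e w.1 w.2) := by
  have h1 : Measurable (fun w : ℝ × ℝ => if w.2 < w.1 then (1:ℝ) else 0) :=
    Measurable.ite (measurableSet_lt measurable_snd measurable_fst) measurable_const
      measurable_const
  have h2 : Measurable (fun w : ℝ × ℝ => if w.2 < 0 then (1:ℝ) else 0) :=
    Measurable.ite (measurableSet_lt measurable_snd measurable_const) measurable_const
      measurable_const
  exact h1.sub h2

lemma measurable_F4 :
    Measurable (fun r : (ℝ × ℝ) × (ℝ × ℝ) => e r.1.1 (r.2.1 + r.2.2) * e r.1.2 r.2.1) := by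
  have h1 : Measurable (fun r : (ℝ × ℝ) × (ℝ × ℝ) => e r.1.1 (r.2.1 + r.2.2)) :=
    measurable_e2.comp ((measurable_fst.fst).prodMk ((measurable_snd.fst).add
      measurable_snd.snd))
  have h2 : Measurable (fun r : (ℝ × ℝ) × (ℝ × ℝ) => e r.1.2 r.2.1) :=
    measurable_e2.comp ((measurable_fst.snd).prodMk measurable_snd.fst)
  exact h1.mul h2

lemma pairing_eq' (hp : 1 ≤ p) (x y : ℝ) :
    ∫ q : ℝ × ℝ, e x (q.1 + q.2) * e y q.1 ∂((volume : Measure ℝ).prod (gSt p hp).measure)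
      = (sg x * sg y) * ((((volume : Measure ℝ).prod (gSt p hp).measure)) (W x y)).toReal := by
  calc ∫ q : ℝ × ℝ, e x (q.1 + q.2) * e y q.1 ∂((volume : Measure ℝ).prod (gSt p hp).measure)
      = ∫ q : ℝ × ℝ, (sg x * sg y) * (W x y).indicator (fun _ => (1:ℝ)) q
          ∂((volume : Measure ℝ).prod (gSt p hp).measure) :=
        integral_congr_ae (Eventually.of_forall (ee_eq x y))
    _ = (sg x * sg y) * ∫ q : ℝ × ℝ, (W x y).indicator (fun _ => (1:ℝ)) q
          ∂((volume : Measure ℝ).prod (gSt p hp).measure) := integral_const_mul _ _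
    _ = (sg x * sg y) * ((((volume : Measure ℝ).prod (gSt p hp).measure)) (W x y)).toReal := by
        rw [integral_indicator_const (1:ℝ) (measurableSet_W x y), smul_eq_mul, mul_one, measureReal_def]

lemma norm_int_ee (hp : 1 ≤ p) (x y : ℝ) :
    ∫ q : ℝ × ℝ, ‖e x (q.1 + q.2) * e y q.1‖ ∂((volume : Measure ℝ).prod (gSt p hp).measure)
      = |(|x| ^ p + |y| ^ p - |x - y| ^ p)| := by
  have hptw : ∀ q : ℝ × ℝ, ‖e x (q.1 + q.2) * e y q.1‖
      = (W x y).indicator (fun _ => (1:ℝ)) q := by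
    intro q
    rw [Real.norm_eq_abs, ee_eq, abs_mul]
    have h1 : |sg x * sg y| = 1 := by
      rw [sg, sg]; split_ifs <;> norm_num
    rw [h1, one_mul]
    by_cases h : q ∈ W x y
    · rw [indicator_of_mem h]; simp
    · rw [indicator_of_notMem h]; simp
  have h2 : ∫ q : ℝ × ℝ, ‖e x (q.1 + q.2) * e y q.1‖
      ∂((volume : Measure ℝ).prod (gSt p hp).measure)
      = ((((volume : Measure ℝ).prod (gSt p hp).measure)) (W x y)).toReal := by
    rw [integral_congr_ae (Eventually.of_forall hptw),
      integral_indicator_const (1:ℝ) (measurableSet_W x y), smul_eq_mul, mul_one, measureReal_def]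
  have h3 := pairing_eq' hp x y
  have h4 := pairing_eq hp x y
  rw [h3] at h4
  have h5 : |sg x * sg y| = 1 := by rw [sg, sg]; split_ifs <;> norm_num
  calc ∫ q : ℝ × ℝ, ‖e x (q.1 + q.2) * e y q.1‖
        ∂((volume : Measure ℝ).prod (gSt p hp).measure)
      = ((((volume : Measure ℝ).prod (gSt p hp).measure)) (W x y)).toReal := h2
    _ = |sg x * sg y| * ((((volume : Measure ℝ).prod (gSt p hp).measure)) (W x y)).toReal := by
        rw [h5, one_mul]
    _ = |(sg x * sg y) * ((((volume : Measure ℝ).prod (gSt p hp).measure)) (W x y)).toReal| := by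
        rw [abs_mul (sg x * sg y) ((((volume : Measure ℝ).prod (gSt p hp).measure)) (W x y)).toReal,
          abs_of_nonneg (ENNReal.toReal_nonneg
          (a := ((volume : Measure ℝ).prod (gSt p hp).measure) (W x y)))]
    _ = |(|x| ^ p + |y| ^ p - |x - y| ^ p)| := by rw [h4]

section Main
variable {μ ν : Measure ℝ} [IsProbabilityMeasure μ] [IsProbabilityMeasure ν]
  {σ : Measure (ℝ × ℝ)}

lemma integrable_fst_ell (hp : 1 ≤ p) (h1 : σ.map Prod.fst = μ)
    (hμ : Integrable (fun x => |x| ^ p) μ) :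
    Integrable (fun z : ℝ × ℝ => |z.1| ^ p) σ := by
  rw [← h1] at hμ
  exact (integrable_map_measure ((measurable_ell hp).aestronglyMeasurable)
    measurable_fst.aemeasurable).mp hμ

lemma integrable_snd_ell (hp : 1 ≤ p) (h2 : σ.map Prod.snd = ν)
    (hν : Integrable (fun x => |x| ^ p) ν) :
    Integrable (fun z : ℝ × ℝ => |z.2| ^ p) σ := by
  rw [← h2] at hν
  exact (integrable_map_measure ((measurable_ell hp).aestronglyMeasurable)
    measurable_snd.aemeasurable).mp hν

lemma integrable_cost (hp : 1 ≤ p) (h1 : σ.map Prod.fst = μ) (h2 : σ.map Prod.snd = ν)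
    (hμ : Integrable (fun x => |x| ^ p) μ) (hν : Integrable (fun x => |x| ^ p) ν) :
    Integrable (fun z : ℝ × ℝ => |z.1 - z.2| ^ p) σ := by
  have hi1 := integrable_fst_ell hp h1 hμ
  have hi2 := integrable_snd_ell hp h2 hν
  refine Integrable.mono (((hi1.add hi2).const_mul (2 ^ p))) ?_ ?_
  · exact ((measurable_ell hp).comp (measurable_fst.sub measurable_snd)).aestronglyMeasurable
  · refine Eventually.of_forall (fun z => ?_)
    rw [Real.norm_eq_abs, Real.norm_eq_abs, abs_of_nonneg (Real.rpow_nonneg (abs_nonneg _) _)]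
    have hb := ell_sub_bound hp z.1 z.2
    have h2p : (0:ℝ) ≤ 2 ^ p := Real.rpow_nonneg (by norm_num) _
    have ha : (0:ℝ) ≤ |z.1| ^ p := Real.rpow_nonneg (abs_nonneg _) _
    have hbb : (0:ℝ) ≤ |z.2| ^ p := Real.rpow_nonneg (abs_nonneg _) _
    calc |z.1 - z.2| ^ p ≤ 2 ^ p * (|z.1| ^ p + |z.2| ^ p) := hb
      _ ≤ |2 ^ p * (|z.1| ^ p + |z.2| ^ p)| := le_abs_self _

lemma integrable_uncurry_ee (hp : 1 ≤ p) (h1 : σ.map Prod.fst = μ) (h2 : σ.map Prod.snd = ν)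
    (hμ : Integrable (fun x => |x| ^ p) μ) (hν : Integrable (fun x => |x| ^ p) ν) :
    Integrable (fun r : (ℝ × ℝ) × (ℝ × ℝ) => e r.1.1 (r.2.1 + r.2.2) * e r.1.2 r.2.1)
      (σ.prod ((volume : Measure ℝ).prod (gSt p hp).measure)) := by
  haveI : IsProbabilityMeasure σ := coupling_prob h1
  rw [integrable_prod_iff (measurable_F4.aestronglyMeasurable)]
  constructor
  · exact Eventually.of_forall (fun z => integrable_ee hp z.1 z.2)
  · have heq : (fun z : ℝ × ℝ => ∫ q : ℝ × ℝ, ‖e z.1 (q.1 + q.2) * e z.2 q.1‖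
        ∂((volume : Measure ℝ).prod (gSt p hp).measure))
        = fun z : ℝ × ℝ => |(|z.1| ^ p + |z.2| ^ p - |z.1 - z.2| ^ p)| :=
      funext (fun z => norm_int_ee hp z.1 z.2)
    rw [heq]
    exact (((integrable_fst_ell hp h1 hμ).add (integrable_snd_ell hp h2 hν)).sub
      (integrable_cost hp h1 h2 hμ hν)).abs

lemma cost_formula (hp : 1 ≤ p) (h1 : σ.map Prod.fst = μ) (h2 : σ.map Prod.snd = ν)
    (hμ : Integrable (fun x => |x| ^ p) μ) (hν : Integrable (fun x => |x| ^ p) ν) :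
    ∫ z : ℝ × ℝ, |z.1 - z.2| ^ p ∂σ
      = (∫ x, |x| ^ p ∂μ) + (∫ x, |x| ^ p ∂ν)
        - ∫ q : ℝ × ℝ, (∫ z : ℝ × ℝ, e z.1 (q.1 + q.2) * e z.2 q.1 ∂σ)
            ∂((volume : Measure ℝ).prod (gSt p hp).measure) := by
  haveI : IsProbabilityMeasure σ := coupling_prob h1
  have hswap := integral_integral_swap (μ := σ)
    (ν := (volume : Measure ℝ).prod (gSt p hp).measure)
    (f := fun z q => e z.1 (q.1 + q.2) * e z.2 q.1)
    (integrable_uncurry_ee hp h1 h2 hμ hν)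
  have hL : ∫ z : ℝ × ℝ, (∫ q : ℝ × ℝ, e z.1 (q.1 + q.2) * e z.2 q.1
      ∂((volume : Measure ℝ).prod (gSt p hp).measure)) ∂σ
      = (∫ x, |x| ^ p ∂μ) + (∫ x, |x| ^ p ∂ν) - ∫ z : ℝ × ℝ, |z.1 - z.2| ^ p ∂σ := by
    rw [integral_congr_ae (Eventually.of_forall (fun z : ℝ × ℝ => pairing_eq hp z.1 z.2))]
    have hi1 := integrable_fst_ell hp h1 hμ
    have hi2 := integrable_snd_ell hp h2 hν
    have hic := integrable_cost hp h1 h2 hμ hν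
    have hsplit : Integrable (fun z : ℝ × ℝ => |z.1| ^ p + |z.2| ^ p) σ := hi1.add hi2
    rw [integral_sub hsplit hic, integral_add hi1 hi2]
    have hfst : ∫ z : ℝ × ℝ, |z.1| ^ p ∂σ = ∫ x, |x| ^ p ∂μ := by
      rw [← h1, integral_map measurable_fst.aemeasurable
        ((measurable_ell hp).aestronglyMeasurable)]
    have hsnd : ∫ z : ℝ × ℝ, |z.2| ^ p ∂σ = ∫ x, |x| ^ p ∂ν := by
      rw [← h2, integral_map measurable_snd.aemeasurable
        ((measurable_ell hp).aestronglyMeasurable)]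
    rw [hfst, hsnd]
  rw [← hswap, hL]
  ring

end Main

noncomputable def pi0 (μ ν : Measure ℝ) : Measure (ℝ × ℝ) :=
  Measure.map (fun u => (quantile μ u, quantile ν u)) (volume.restrict (Ioo (0:ℝ) 1))

section Pi0
variable (μ ν : Measure ℝ) [IsProbabilityMeasure μ] [IsProbabilityMeasure ν]

lemma aemeasurable_qpair :
    AEMeasurable (fun u => (quantile μ u, quantile ν u)) (volume.restrict (Ioo (0:ℝ) 1)) :=
  (aemeasurable_quantile μ).prodMk (aemeasurable_quantile ν)

lemma pi0_fst : (pi0 μ ν).map Prod.fst = μ := by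
  rw [pi0, AEMeasurable.map_map_of_aemeasurable measurable_fst.aemeasurable (aemeasurable_qpair μ ν)]
  exact map_quantile μ

lemma pi0_snd : (pi0 μ ν).map Prod.snd = ν := by
  rw [pi0, AEMeasurable.map_map_of_aemeasurable measurable_snd.aemeasurable (aemeasurable_qpair μ ν)]
  exact map_quantile ν

lemma pi0_D_ge (s t : ℝ) : μ (Ioi s) ⊓ ν (Ioi t) ≤ pi0 μ ν (D s t) := by
  rw [pi0, Measure.map_apply_of_aemeasurable (aemeasurable_qpair μ ν) (measurableSet_D s t)]
  set m : ℝ := F μ s ⊔ F ν t with hm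
  have hm0 : 0 ≤ m := le_trans (F_nonneg s) le_sup_left
  have hm1 : m ≤ 1 := sup_le (F_le_one s) (F_le_one t)
  have hsub : Ioo m 1 ⊆ (fun u => (quantile μ u, quantile ν u)) ⁻¹' D s t := by
    intro u hu
    have hu1 : F μ s < u := lt_of_le_of_lt le_sup_left hu.1
    have hu2 : F ν t < u := lt_of_le_of_lt le_sup_right hu.1
    simp only [mem_preimage, D, mem_setOf_eq]
    exact ⟨quantile_lt_of_lt_F hu.2 hu1, quantile_lt_of_lt_F hu.2 hu2⟩
  calc μ (Ioi s) ⊓ ν (Ioi t) ≤ ENNReal.ofReal (1 - m) := by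
        rcases le_total (F μ s) (F ν t) with h | h
        · rw [hm, sup_eq_right.2 h]
          exact le_trans inf_le_right (le_of_eq (measure_Ioi_eq t))
        · rw [hm, sup_eq_left.2 h]
          exact le_trans inf_le_left (le_of_eq (measure_Ioi_eq s))
    _ = volume (Ioo m 1) := by rw [Real.volume_Ioo]
    _ = (volume.restrict (Ioo (0:ℝ) 1)) (Ioo m 1) := by
        rw [Measure.restrict_apply measurableSet_Ioo,
          inter_eq_self_of_subset_left
            (fun u hu => mem_Ioo.2 ⟨lt_of_le_of_lt hm0 (mem_Ioo.1 hu).1, (mem_Ioo.1 hu).2⟩)]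
    _ ≤ (volume.restrict (Ioo (0:ℝ) 1))
          ((fun u => (quantile μ u, quantile ν u)) ⁻¹' D s t) := measure_mono hsub

end Pi0

section Final
variable {μ ν : Measure ℝ} [IsProbabilityMeasure μ] [IsProbabilityMeasure ν]
  {σ : Measure (ℝ × ℝ)}

lemma cost_ge (hp : 1 ≤ p) (h1 : σ.map Prod.fst = μ) (h2 : σ.map Prod.snd = ν)
    (hμ : Integrable (fun x => |x| ^ p) μ) (hν : Integrable (fun x => |x| ^ p) ν) :
    ∫ z : ℝ × ℝ, |z.1 - z.2| ^ p ∂(pi0 μ ν) ≤ ∫ z : ℝ × ℝ, |z.1 - z.2| ^ p ∂σ := by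
  haveI : IsProbabilityMeasure σ := coupling_prob h1
  haveI : IsProbabilityMeasure (pi0 μ ν) := coupling_prob (pi0_fst μ ν)
  rw [cost_formula hp h1 h2 hμ hν, cost_formula hp (pi0_fst μ ν) (pi0_snd μ ν) hμ hν]
  have hIσ : Integrable (fun q : ℝ × ℝ => ∫ z : ℝ × ℝ, e z.1 (q.1 + q.2) * e z.2 q.1 ∂σ)
      ((volume : Measure ℝ).prod (gSt p hp).measure) :=
    (integrable_uncurry_ee hp h1 h2 hμ hν).integral_prod_right
  have hI0 : Integrable (fun q : ℝ × ℝ => ∫ z : ℝ × ℝ, e z.1 (q.1 + q.2) * e z.2 q.1 ∂(pi0 μ ν))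
      ((volume : Measure ℝ).prod (gSt p hp).measure) :=
    (integrable_uncurry_ee hp (pi0_fst μ ν) (pi0_snd μ ν) hμ hν).integral_prod_right
  have hptw : ∀ q : ℝ × ℝ, (∫ z : ℝ × ℝ, e z.1 (q.1 + q.2) * e z.2 q.1 ∂σ)
      ≤ ∫ z : ℝ × ℝ, e z.1 (q.1 + q.2) * e z.2 q.1 ∂(pi0 μ ν) := by
    intro q
    rw [I_expand h1 h2 (q.1 + q.2) q.1, I_expand (pi0_fst μ ν) (pi0_snd μ ν) (q.1 + q.2) q.1]
    have hle : σ (D (q.1 + q.2) q.1) ≤ (pi0 μ ν) (D (q.1 + q.2) q.1) :=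
      le_trans (coupling_D_le h1 h2 _ _) (pi0_D_ge μ ν _ _)
    have htr : (σ (D (q.1 + q.2) q.1)).toReal ≤ ((pi0 μ ν) (D (q.1 + q.2) q.1)).toReal :=
      ENNReal.toReal_mono (measure_ne_top _ _) hle
    linarith
  have := integral_mono hIσ hI0 hptw
  linarith

end Final
end WassQ


open Set Filter Topology
open scoped ENNReal NNReal

end Aux

theorem wasserstein_eq_lp_dist_of_quantiles
    (μ ν : Measure ℝ) [IsProbabilityMeasure μ] [IsProbabilityMeasure ν]
    (p : ℝ) (hp : 1 ≤ p)
    (hμ : Integrable (fun x => |x| ^ p) μ) (hν : Integrable (fun x => |x| ^ p) ν) :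
    Wp p μ ν = (∫ t in Set.Ioo (0 : ℝ) 1, |quantile μ t - quantile ν t| ^ p) ^ (1 / p) := by
  classical
  have hdist : (fun z : ℝ × ℝ => dist z.1 z.2 ^ p) = fun z : ℝ × ℝ => |z.1 - z.2| ^ p := by
    funext z; rw [Real.dist_eq]
  have hcost0 : ∫ z : ℝ × ℝ, dist z.1 z.2 ^ p ∂(WassQ.pi0 μ ν)
      = ∫ t in Set.Ioo (0:ℝ) 1, |quantile μ t - quantile ν t| ^ p := by
    rw [hdist, WassQ.pi0]
    have hAESM : AEStronglyMeasurable (fun z : ℝ × ℝ => |z.1 - z.2| ^ p)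
        (Measure.map (fun u => (quantile μ u, quantile ν u))
          (volume.restrict (Set.Ioo (0:ℝ) 1))) :=
      (((WassQ.measurable_ell hp).comp (measurable_fst.sub measurable_snd)).aestronglyMeasurable)
    rw [integral_map (WassQ.aemeasurable_qpair μ ν) hAESM]
  have hmem : (∫ t in Set.Ioo (0:ℝ) 1, |quantile μ t - quantile ν t| ^ p) ^ (1/p)
      ∈ ((fun π : Measure (ℝ × ℝ) => (∫ z, dist z.1 z.2 ^ p ∂π) ^ (1 / p)) ''
        {π | π.map Prod.fst = μ ∧ π.map Prod.snd = ν}) :=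
    ⟨WassQ.pi0 μ ν, ⟨WassQ.pi0_fst μ ν, WassQ.pi0_snd μ ν⟩,
      by exact congrArg (· ^ (1/p)) hcost0⟩
  have hbdd : BddBelow ((fun π : Measure (ℝ × ℝ) => (∫ z, dist z.1 z.2 ^ p ∂π) ^ (1 / p)) ''
      {π | π.map Prod.fst = μ ∧ π.map Prod.snd = ν}) := by
    refine ⟨0, ?_⟩
    rintro b ⟨π, hπ, rfl⟩
    exact Real.rpow_nonneg
      (integral_nonneg (fun z => Real.rpow_nonneg dist_nonneg _)) _
  rw [Wp]
  refine le_antisymm (csInf_le hbdd hmem) (le_csInf ⟨_, hmem⟩ ?_)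
  rintro b ⟨π, ⟨hπ1, hπ2⟩, rfl⟩
  have h0 : 0 ≤ ∫ t in Set.Ioo (0:ℝ) 1, |quantile μ t - quantile ν t| ^ p :=
    integral_nonneg (fun t => Real.rpow_nonneg (abs_nonneg _) _)
  refine Real.rpow_le_rpow h0 ?_ (one_div_nonneg.2 (by linarith))
  rw [← hcost0, hdist]
  exact WassQ.cost_ge hp hπ1 hπ2 hμ hν
end

section
/- On a compact connected metric space X, the ∞-Wasserstein distance W_∞ restricted to the set of fully supported Borel probability measures induces the weak-* topology; that is, a sequence of fully supported probability measures converges weakly-* to a fully supported probability measure if and only if it converges in W_∞. -/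
open MeasureTheory Filter

/-- The symmetric `∞`-Wasserstein (optimal matching) distance:
`inf {r > 0 : μ(U) ≤ ν(U_r)` and `ν(U) ≤ μ(U_r)` for all Borel `U}`. -/
noncomputable def Winf {E : Type*} [MeasurableSpace E] [PseudoMetricSpace E]
    (μ ν : Measure E) : ℝ :=
  sInf {r : ℝ | 0 < r ∧ ∀ U : Set E, MeasurableSet U →
    μ U ≤ ν (Metric.thickening r U) ∧ ν U ≤ μ (Metric.thickening r U)}

open Metric Set ENNReal in
/-- Key "gap" lemma: on a compact connected space with a fully supported probability
measure, thickening a set by `ε` increases the measure by a uniform amount `c`,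
as long as the thickening is not everything. -/
lemma gap_lemma {X : Type*} [MetricSpace X] [CompactSpace X] [ConnectedSpace X]
    [MeasurableSpace X] [BorelSpace X] (μ : Measure X) [IsProbabilityMeasure μ]
    (hμ : ∀ U : Set X, IsOpen U → U.Nonempty → 0 < μ U) {ε : ℝ} (hε : 0 < ε) :
    ∃ c : ℝ≥0∞, 0 < c ∧ c ≠ ∞ ∧ ∀ U : Set X, MeasurableSet U → U.Nonempty →
      Metric.thickening ε U ≠ Set.univ → μ U + c ≤ μ (Metric.thickening ε U) := by
  obtain ⟨t, _tsub, tfin, tcov⟩ :=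
    finite_cover_balls_of_compact (isCompact_univ (X := X)) (show 0 < ε/8 by linarith)
  obtain ⟨x⟩ := ‹ConnectedSpace X›.toNonempty
  obtain ⟨x₀, hx₀t, _⟩ : ∃ y ∈ t, x ∈ ball y (ε/8) := by
    simpa using tcov (mem_univ x)
  have tne : tfin.toFinset.Nonempty := ⟨x₀, tfin.mem_toFinset.2 hx₀t⟩
  set c : ℝ≥0∞ := tfin.toFinset.inf' tne (fun y => μ (ball y (ε/8))) with hc
  refine ⟨c, ?_, ?_, ?_⟩
  · rw [hc, Finset.lt_inf'_iff]
    exact fun y _ => hμ _ isOpen_ball ⟨y, mem_ball_self (by linarith)⟩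
  · have : c ≤ μ (ball x₀ (ε/8)) :=
      Finset.inf'_le _ (tfin.mem_toFinset.2 hx₀t)
    exact (this.trans_lt (measure_lt_top μ _)).ne
  · intro U hUm hUne hUth
    -- find a point at distance ≥ ε from U
    obtain ⟨w, hw⟩ : ∃ w : X, w ∉ thickening ε U := by
      by_contra h
      push_neg at h
      exact hUth (eq_univ_of_forall h)
    have hwd : ε ≤ infDist w U := by
      by_contra h
      exact hw ((mem_thickening_iff_infDist_lt hUne).2 (by linarith))
    obtain ⟨u, hu⟩ := id hUne
    -- intermediate value: a point z with infDist z U = ε/2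
    have hcont : ContinuousOn (fun y => infDist y U) univ :=
      (continuous_infDist_pt U).continuousOn
    have : ε/2 ∈ (fun y => infDist y U) '' univ := by
      apply IsPreconnected.intermediate_value isPreconnected_univ (mem_univ u) (mem_univ w) hcont
      constructor
      · simp [infDist_zero_of_mem hu]; linarith
      · simpa [infDist_zero_of_mem hu] using by linarith
    obtain ⟨z, -, hz⟩ := this
    have hz' : infDist z U = ε/2 := hz
    -- the ball around z is inside the thickening and disjoint from U
    have hball_sub : ball z (ε/4) ⊆ thickening ε U := by
      intro y hy
      rw [mem_ball] at hy
      apply (mem_thickening_iff_infDist_lt hUne).2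
      have := infDist_le_infDist_add_dist (x := y) (y := z) (s := U)
      rw [hz'] at this
      linarith
    have hdisj : Disjoint U (ball z (ε/4)) := by
      rw [Set.disjoint_left]
      intro y hyU hyB
      rw [mem_ball] at hyB
      have := infDist_le_infDist_add_dist (x := z) (y := y) (s := U)
      rw [hz', infDist_zero_of_mem hyU, dist_comm] at this
      linarith
    -- the ball has measure at least c
    obtain ⟨x₁, hx₁t, hx₁⟩ : ∃ y ∈ t, z ∈ ball y (ε/8) := by
      simpa using tcov (mem_univ z)
    have hsub : ball x₁ (ε/8) ⊆ ball z (ε/4) := by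
      intro y hy
      rw [mem_ball] at hy hx₁ ⊢
      have := dist_triangle y x₁ z
      rw [dist_comm x₁ z] at this
      linarith [dist_comm z x₁ ▸ hx₁]
    have hcball : c ≤ μ (ball z (ε/4)) :=
      (Finset.inf'_le _ (tfin.mem_toFinset.2 hx₁t)).trans (measure_mono hsub)
    calc μ U + c ≤ μ U + μ (ball z (ε/4)) := add_le_add_right hcball _
      _ = μ (U ∪ ball z (ε/4)) := (measure_union hdisj measurableSet_ball).symm
      _ ≤ μ (thickening ε U) :=
          measure_mono (union_subset (self_subset_thickening hε U) hball_sub)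

open Metric Set ENNReal in
theorem winf_metrizes_weak_star_on_faithful {X : Type*} [MetricSpace X] [CompactSpace X]
    [ConnectedSpace X] [MeasurableSpace X] [BorelSpace X]
    (μs : ℕ → Measure X) (μ : Measure X)
    [∀ n, IsProbabilityMeasure (μs n)] [IsProbabilityMeasure μ]
    (hμs : ∀ n, ∀ U : Set X, IsOpen U → U.Nonempty → 0 < μs n U)
    (hμ : ∀ U : Set X, IsOpen U → U.Nonempty → 0 < μ U) :
    (∀ f : C(X, ℝ), Tendsto (fun n => ∫ x, f x ∂(μs n)) atTop (nhds (∫ x, f x ∂μ)))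
      ↔ Tendsto (fun n => Winf (μs n) μ) atTop (nhds 0) := by
  classical
  -- Basic properties of the Winf defining sets
  set S : ℕ → Set ℝ := fun n => {r : ℝ | 0 < r ∧ ∀ U : Set X, MeasurableSet U →
    μs n U ≤ μ (Metric.thickening r U) ∧ μ U ≤ μs n (Metric.thickening r U)} with hS
  have hWdef : ∀ n, Winf (μs n) μ = sInf (S n) := fun n => rfl
  have hSne : ∀ n, (S n).Nonempty := by
    intro n
    refine ⟨diam (univ : Set X) + 1, by positivity, fun U hU => ?_⟩
    rcases U.eq_empty_or_nonempty with rfl | ⟨u, hu⟩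
    · simp
    · have : thickening (diam (univ : Set X) + 1) U = univ := by
        apply eq_univ_of_forall
        intro y
        apply (mem_thickening_iff_infDist_lt ⟨u, hu⟩).2
        have h1 : infDist y U ≤ dist y u := infDist_le_dist_of_mem hu
        have h2 : dist y u ≤ diam (univ : Set X) :=
          dist_le_diam_of_mem isCompact_univ.isBounded (mem_univ _) (mem_univ _)
        linarith
      rw [this]
      constructor <;> simp [measure_univ] <;> exact prob_le_one
  have hWnn : ∀ n, 0 ≤ Winf (μs n) μ := fun n =>
    Real.sInf_nonneg (fun r hr => hr.1.le)
  have hSbdd : ∀ n, BddBelow (S n) := fun n => ⟨0, fun r hr => hr.1.le⟩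
  -- probability measure versions
  let P : ℕ → ProbabilityMeasure X := fun n => ⟨μs n, inferInstance⟩
  let Q : ProbabilityMeasure X := ⟨μ, inferInstance⟩
  let Pl : ℕ → LevyProkhorov (ProbabilityMeasure X) := fun n => LevyProkhorov.ofMeasure (P n)
  let Ql : LevyProkhorov (ProbabilityMeasure X) := LevyProkhorov.ofMeasure Q
  -- weak convergence is equivalent to convergence of the probability measures
  have hweak : (∀ f : C(X, ℝ), Tendsto (fun n => ∫ x, f x ∂(μs n)) atTop
      (nhds (∫ x, f x ∂μ))) ↔ Tendsto P atTop (nhds Q) := by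
    rw [ProbabilityMeasure.tendsto_iff_forall_integral_tendsto]
    constructor
    · intro h f
      exact h f.toContinuousMap
    · intro h f
      exact h (BoundedContinuousFunction.mkOfCompact f)
  rw [hweak]
  -- connection between LP edist and the topology
  have hLP : Tendsto P atTop (nhds Q) ↔
      ∀ δ : ℝ, 0 < δ → ∀ᶠ n in atTop,
        levyProkhorovEDist (μs n) μ < ENNReal.ofReal δ := by
    constructor
    · intro h δ hδ
      have hcont := LevyProkhorov.continuous_ofMeasure_probabilityMeasure (Ω := X)
      have h2 : Tendsto (fun n => LevyProkhorov.ofMeasure (P n))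
          atTop (nhds (LevyProkhorov.ofMeasure Q)) :=
        (hcont.tendsto _).comp h
      rw [Metric.tendsto_atTop] at h2
      obtain ⟨N, hN⟩ := h2 δ hδ
      refine eventually_atTop.2 ⟨N, fun n hn => ?_⟩
      have hdd := hN n hn
      rw [LevyProkhorov.dist_probabilityMeasure_def] at hdd
      have hdist : (levyProkhorovEDist (μs n) μ).toReal < δ := hdd
      exact (ENNReal.lt_ofReal_iff_toReal_lt (levyProkhorovEDist_ne_top _ _)).2 hdist
    · intro h
      have hcont := LevyProkhorov.continuous_toMeasure_probabilityMeasure (Ω := X)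
      have h2 : Tendsto Pl atTop (nhds Ql) := by
        rw [Metric.tendsto_atTop]
        intro δ hδ
        obtain ⟨N, hN⟩ := eventually_atTop.1 (h δ hδ)
        refine ⟨N, fun n hn => ?_⟩
        have hde : dist (Pl n) Ql = (levyProkhorovEDist (μs n) μ).toReal := rfl
        rw [hde]
        exact ENNReal.toReal_lt_of_lt_ofReal (hN n hn)
      exact (hcont.tendsto Ql).comp h2
  rw [hLP]
  constructor
  · -- weak (as LP) convergence implies Winf convergence
    intro h
    rw [Metric.tendsto_atTop]
    intro ε hε
    obtain ⟨c, hc0, hcfin, hcgap⟩ := gap_lemma μ hμ (show 0 < ε/4 by linarith)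
    set δ : ℝ := min c.toReal (ε/8) with hδdef
    have hδ0 : 0 < δ := lt_min (ENNReal.toReal_pos hc0.ne' hcfin) (by linarith)
    have hδc : ENNReal.ofReal δ ≤ c := by
      calc ENNReal.ofReal δ ≤ ENNReal.ofReal c.toReal :=
            ENNReal.ofReal_le_ofReal (min_le_left _ _)
        _ = c := ENNReal.ofReal_toReal hcfin
    obtain ⟨N, hN⟩ := eventually_atTop.1 (h δ hδ0)
    refine ⟨N, fun n hn => ?_⟩
    rw [Real.dist_eq, sub_zero, abs_of_nonneg (hWnn n)]
    have hmem : ε/2 ∈ S n := by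
      refine ⟨by linarith, fun U hU => ?_⟩
      rcases U.eq_empty_or_nonempty with rfl | hUne
      · simp
      by_cases hful : thickening (ε/2) U = univ
      · rw [hful]
        constructor <;> · rw [measure_univ]; exact prob_le_one
      have hLPn := hN n hn
      have hδeq : (ENNReal.ofReal δ).toReal = δ := ENNReal.toReal_ofReal hδ0.le
      constructor
      · -- μs n U ≤ μ (thickening (ε/2) U)
        have h1 : μs n U ≤ μ (thickening δ U) + ENNReal.ofReal δ := by
          have := left_measure_le_of_levyProkhorovEDist_lt hLPn (B := U) hU
          rwa [hδeq] at this
        have h2 : thickening δ U ⊆ thickening (ε/4) U :=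
          thickening_mono (by rw [hδdef]; exact (min_le_right _ _).trans (by linarith)) U
        have h3 : μs n U ≤ μ (thickening (ε/4) U) + c :=
          h1.trans (add_le_add (measure_mono h2) hδc)
        have h4 : thickening (ε/4) (thickening (ε/4) U) ≠ univ := by
          intro hcontra
          apply hful
          apply eq_univ_of_forall
          intro y
          have : y ∈ thickening (ε/4) (thickening (ε/4) U) := hcontra ▸ mem_univ y
          have := thickening_thickening_subset (ε/4) (ε/4) U this
          simpa [show ε/4 + ε/4 = ε/2 by ring] using this
        have h5 := hcgap (thickening (ε/4) U) isOpen_thickening.measurableSet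
          (hUne.mono (self_subset_thickening (by linarith) U)) h4
        calc μs n U ≤ μ (thickening (ε/4) U) + c := h3
          _ ≤ μ (thickening (ε/4) (thickening (ε/4) U)) := h5
          _ ≤ μ (thickening (ε/2) U) := by
              apply measure_mono
              have := thickening_thickening_subset (ε/4) (ε/4) (α := X) U
              rwa [show ε/4 + ε/4 = ε/2 by ring] at this
      · -- μ U ≤ μs n (thickening (ε/2) U)
        have h4 : thickening (ε/4) U ≠ univ := by
          intro hcontra
          apply hful
          apply eq_univ_of_forall
          intro y
          exact thickening_mono (by linarith) U (hcontra ▸ mem_univ y)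
        have h5 : μ U + c ≤ μ (thickening (ε/4) U) := hcgap U hU hUne h4
        have h6 : μ (thickening (ε/4) U) ≤
            μs n (thickening δ (thickening (ε/4) U)) + ENNReal.ofReal δ := by
          have := right_measure_le_of_levyProkhorovEDist_lt hLPn
            (B := thickening (ε/4) U) isOpen_thickening.measurableSet
          rwa [hδeq] at this
        have h7 : thickening δ (thickening (ε/4) U) ⊆ thickening (ε/2) U := by
          refine (thickening_thickening_subset δ (ε/4) U).trans (thickening_mono ?_ U)
          have : δ ≤ ε/8 := min_le_right _ _
          linarith
        have h8 : μ U + c ≤ μs n (thickening (ε/2) U) + c := by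
          calc μ U + c ≤ μ (thickening (ε/4) U) := h5
            _ ≤ μs n (thickening δ (thickening (ε/4) U)) + ENNReal.ofReal δ := h6
            _ ≤ μs n (thickening (ε/2) U) + c :=
                add_le_add (measure_mono h7) hδc
        exact (ENNReal.add_le_add_iff_right hcfin).1 h8
    calc Winf (μs n) μ ≤ ε/2 := csInf_le (hSbdd n) hmem
      _ < ε := by linarith
  · -- Winf convergence implies LP convergence
    intro h δ hδ
    rw [Metric.tendsto_atTop] at h
    obtain ⟨N, hN⟩ := h (δ/2) (by linarith)
    refine eventually_atTop.2 ⟨N, fun n hn => ?_⟩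
    have hw : Winf (μs n) μ < δ/2 := by
      have := hN n hn
      rwa [Real.dist_eq, sub_zero, abs_of_nonneg (hWnn n)] at this
    obtain ⟨r, hrS, hr⟩ : ∃ r ∈ S n, r < δ/2 := by
      by_contra hcon
      push_neg at hcon
      exact absurd (le_csInf (hSne n) hcon) (not_le.2 hw)
    calc levyProkhorovEDist (μs n) μ ≤ ENNReal.ofReal (δ/2) := by
          apply sInf_le
          intro B hB
          have hrB := hrS.2 B hB
          have hsub : thickening r B ⊆ thickening (ENNReal.ofReal (δ/2)).toReal B := by
            apply thickening_mono
            rw [ENNReal.toReal_ofReal (by linarith)]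
            linarith
          exact ⟨le_add_right ((hrB.1).trans (measure_mono hsub)),
            le_add_right ((hrB.2).trans (measure_mono hsub))⟩
      _ < ENNReal.ofReal δ := by
          apply ENNReal.ofReal_lt_ofReal_iff_of_nonneg (by linarith) |>.2
          linarith
end
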